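/- arXiv:1209.2933 — 5 statements merged into one kernel-verified Lean document; each statement's English description precedes it below -/
import Mathlib

section
/- Define a sequence I_n(a,b,c,d,t) of rational functions by I₀ = 1, I₁ = (1−abcd)/((1−ac)(1−bc)(1−cd)(1−ad)(1−bd)), and for n ≥ 2 the recurrence I_n(a,b;c,d) = [c/((1−ac)(1−bc)(1−dc)(c−d))]·I_{n−1}(a,b;tc,d) + [d/((1−ad)(1−bd)(1−cd)(d−c))]·I_{n−1}(a,b;c,td). Then for all n ≥ 0, I_n(a,b;c,d) = ∏_{i=0}^{n−1} [(1−t^i ac)(1−t^i bc)(1−t^i cd)(1−t^i ad)(1−t^i bd)]^{−1} · ∏_{j=n−1}^{2n−2} (1−t^j abcd). -/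
/-!
Write `Gₙ(c, d)` for the claimed closed form. Both `Gₙ(tc, d)` and `Gₙ(c, td)` differ from
`Gₙ₊₁(c, d)` only by the boundary factors of its denominator and by the top factor
`1 - t²ⁿabcd` of its numerator, so `Gₙ` satisfies the recurrence by the polynomial identity
`c(1 - Tad)(1 - Tbd) - d(1 - Tac)(1 - Tbc) = (c - d)(1 - T²abcd)` with `T = tⁿ`.
Induction on `n` over the pairs `(tᵏc, tˡd)` then identifies `Iₙ` with `Gₙ`; in `ℚ(a,b,c,d,t)`
none of the denominators met along the way vanishes.
-/

open Finset

/-- The field of rational functions `ℚ(a,b,c,d,t)`; the variables `X 0, X 1, X 2, X 3, X 4`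
play the roles of `a, b, c, d, t` respectively. -/
noncomputable abbrev RatFunField : Type := FractionRing (MvPolynomial (Fin 5) ℚ)

noncomputable def rfVar (i : Fin 5) : RatFunField :=
  algebraMap (MvPolynomial (Fin 5) ℚ) RatFunField (MvPolynomial.X i)

section Recurrence

variable {K : Type*} [Field K]

theorem div_mul_inv_add_div_mul_inv_eq {c d A₁ A₂ B₁ B₂ D D₁ D₂ N S : K} (hcd : c ≠ d)
    (hD : D ≠ 0) (hD₁ : D = A₁ * B₁ * D₁) (hD₂ : D = A₂ * B₂ * D₂)
    (hS : c * B₁ - d * B₂ = (c - d) * S) :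
    c / (A₁ * (c - d)) * (D₁⁻¹ * N) + d / (A₂ * (d - c)) * (D₂⁻¹ * N) = D⁻¹ * (N * S) := by
  have hcd' : c - d ≠ 0 := sub_ne_zero.mpr hcd
  have hdc : d - c ≠ 0 := sub_ne_zero.mpr hcd.symm
  have hAB₁ : A₁ * B₁ ≠ 0 := by rintro h; simp [hD₁, h] at hD
  have hAB₂ : A₂ * B₂ ≠ 0 := by rintro h; simp [hD₂, h] at hD
  obtain ⟨hA₁, hB₁⟩ := mul_ne_zero_iff.mp hAB₁
  obtain ⟨hA₂, hB₂⟩ := mul_ne_zero_iff.mp hAB₂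
  have hS' : S = (c * B₁ - d * B₂) / (c - d) := by field_simp; rw [hS]; ring
  have hD₁' : D₁ = D / (A₁ * B₁) := by field_simp; rw [hD₁]; ring
  have hD₂' : D₂ = D / (A₂ * B₂) := by field_simp; rw [hD₂]; ring
  rw [hS', hD₁', hD₂']
  field_simp
  ring

variable (a b t : K)

def gustafsonFactor (i : ℕ) (c d : K) : K :=
  (1 - t ^ i * a * c) * (1 - t ^ i * b * c) * (1 - t ^ i * c * d) * (1 - t ^ i * a * d) *
    (1 - t ^ i * b * d)

def gustafsonDenom (n : ℕ) (c d : K) : K :=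
  ∏ i ∈ range n, gustafsonFactor a b t i c d

def gustafsonNumer (n : ℕ) (c d : K) : K :=
  ∏ j ∈ Ico (n - 1) (2 * n - 1), (1 - t ^ j * a * b * c * d)

def gustafsonSolution (n : ℕ) (c d : K) : K :=
  (gustafsonDenom a b t n c d)⁻¹ * gustafsonNumer a b t n c d

variable {a b t}

theorem gustafsonDenom_comm (n : ℕ) (c d : K) :
    gustafsonDenom a b t n c d = gustafsonDenom a b t n d c :=
  prod_congr rfl fun i _ => by simp only [gustafsonFactor]; ring

theorem gustafsonDenom_succ_left (n : ℕ) (c d : K) :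
    gustafsonDenom a b t (n + 1) c d =
      (1 - a * c) * (1 - b * c) * (1 - c * d) * ((1 - t ^ n * a * d) * (1 - t ^ n * b * d)) *
        gustafsonDenom a b t n (t * c) d := by
  induction n with
  | zero =>
    simp only [gustafsonDenom, gustafsonFactor, zero_add, range_one, range_zero, prod_singleton,
      prod_empty, pow_zero, one_mul, mul_one]
    ring
  | succ n ih =>
    rw [gustafsonDenom, prod_range_succ, ← gustafsonDenom, ih,
      gustafsonDenom.eq_def a b t (n + 1), prod_range_succ, ← gustafsonDenom]
    simp only [gustafsonFactor]
    ring

theorem gustafsonDenom_succ_right (n : ℕ) (c d : K) :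
    gustafsonDenom a b t (n + 1) c d =
      (1 - a * d) * (1 - b * d) * (1 - c * d) * ((1 - t ^ n * a * c) * (1 - t ^ n * b * c)) *
        gustafsonDenom a b t n c (t * d) := by
  rw [gustafsonDenom_comm, gustafsonDenom_succ_left, gustafsonDenom_comm _ c, mul_comm d c]

theorem gustafsonNumer_mul_right (n : ℕ) (c d : K) :
    gustafsonNumer a b t n c (t * d) = gustafsonNumer a b t n (t * c) d :=
  prod_congr rfl fun j _ => by ring

theorem gustafsonNumer_succ {n : ℕ} (hn : 1 ≤ n) (c d : K) :
    gustafsonNumer a b t (n + 1) c d =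
      gustafsonNumer a b t n (t * c) d * (1 - (t ^ n) ^ 2 * a * b * c * d) := by
  obtain ⟨m, rfl⟩ := Nat.exists_eq_add_of_le' hn
  have hshift : gustafsonNumer a b t (m + 1) (t * c) d =
      ∏ j ∈ Ico (m + 1) (2 * m + 2), (1 - t ^ j * a * b * c * d) := by
    rw [gustafsonNumer, show 2 * (m + 1) - 1 = 2 * m + 1 by omega, Nat.add_sub_cancel,
      ← prod_Ico_add']
    exact prod_congr rfl fun j _ => by ring
  rw [hshift, gustafsonNumer, show 2 * (m + 1 + 1) - 1 = 2 * m + 2 + 1 by omega,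
    Nat.add_sub_cancel, prod_Ico_succ_top (by omega)]
  ring

theorem gustafsonSolution_succ {n : ℕ} (hn : 1 ≤ n) {c d : K} (hcd : c ≠ d)
    (hD : gustafsonDenom a b t (n + 1) c d ≠ 0) :
    gustafsonSolution a b t (n + 1) c d =
      c / ((1 - a * c) * (1 - b * c) * (1 - d * c) * (c - d)) *
          gustafsonSolution a b t n (t * c) d
      + d / ((1 - a * d) * (1 - b * d) * (1 - c * d) * (d - c)) *
          gustafsonSolution a b t n c (t * d) := by
  rw [gustafsonSolution, gustafsonSolution, gustafsonSolution, gustafsonNumer_mul_right,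
    gustafsonNumer_succ hn, mul_comm d c]
  have hkey : c * ((1 - t ^ n * a * d) * (1 - t ^ n * b * d))
      - d * ((1 - t ^ n * a * c) * (1 - t ^ n * b * c)) =
      (c - d) * (1 - (t ^ n) ^ 2 * a * b * c * d) := by
    ring
  exact (div_mul_inv_add_div_mul_inv_eq hcd hD (gustafsonDenom_succ_left n c d)
    (gustafsonDenom_succ_right n c d) hkey).symm

theorem eq_gustafsonSolution_of_recurrence (I : ℕ → K → K → K)
    (h0 : ∀ c d : K, I 0 c d = 1)
    (h1 : ∀ c d : K, I 1 c d =
      (1 - a * b * c * d) / ((1 - a * c) * (1 - b * c) * (1 - c * d) * (1 - a * d) * (1 - b * d)))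
    (hrec : ∀ n : ℕ, 2 ≤ n → ∀ c d : K, I n c d =
      c / ((1 - a * c) * (1 - b * c) * (1 - d * c) * (c - d)) * I (n - 1) (t * c) d
      + d / ((1 - a * d) * (1 - b * d) * (1 - c * d) * (d - c)) * I (n - 1) c (t * d))
    {c d : K} (hne : ∀ k l : ℕ, t ^ k * c ≠ t ^ l * d)
    (hfactor : ∀ i k l : ℕ, gustafsonFactor a b t i (t ^ k * c) (t ^ l * d) ≠ 0) (n : ℕ) :
    ∀ k l : ℕ,
      I n (t ^ k * c) (t ^ l * d) = gustafsonSolution a b t n (t ^ k * c) (t ^ l * d) := by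
  induction n with
  | zero => intro k l; simp [h0, gustafsonSolution, gustafsonDenom, gustafsonNumer]
  | succ n ih =>
    intro k l
    rcases Nat.eq_zero_or_pos n with rfl | hn
    · simp [h1, gustafsonSolution, gustafsonDenom, gustafsonNumer, gustafsonFactor,
        div_eq_inv_mul]
    have hD : gustafsonDenom a b t (n + 1) (t ^ k * c) (t ^ l * d) ≠ 0 :=
      prod_ne_zero_iff.mpr fun i _ => hfactor i k l
    have hc : t * (t ^ k * c) = t ^ (k + 1) * c := by rw [pow_succ', mul_assoc]
    have hd : t * (t ^ l * d) = t ^ (l + 1) * d := by rw [pow_succ', mul_assoc]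
    rw [hrec (n + 1) (by omega), Nat.add_sub_cancel, gustafsonSolution_succ hn (hne k l) hD, hc,
      hd, ih, ih]

end Recurrence

theorem algebraMap_ne_zero_of_eval_ne_zero {σ R : Type*} [CommRing R] [IsDomain R]
    {p : MvPolynomial σ R} (v : σ → R) (h : MvPolynomial.eval v p ≠ 0) :
    algebraMap (MvPolynomial σ R) (FractionRing (MvPolynomial σ R)) p ≠ 0 :=
  (map_ne_zero_iff _ (IsFractionRing.injective _ _)).mpr (ne_zero_of_map h)

-- Each nonvanishing is witnessed by the specialization `a = b = d = 0`, `c = t = 1`.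
theorem rfVar_shift_ne (k l : ℕ) : rfVar 4 ^ k * rfVar 2 ≠ rfVar 4 ^ l * rfVar 3 := by
  rw [← sub_ne_zero]
  simp only [rfVar, ← map_pow, ← map_mul, ← map_sub]
  exact algebraMap_ne_zero_of_eval_ne_zero ![0, 0, 1, 0, 1] (by simp)

theorem gustafsonFactor_rfVar_shift_ne_zero (i k l : ℕ) :
    gustafsonFactor (rfVar 0) (rfVar 1) (rfVar 4) i (rfVar 4 ^ k * rfVar 2)
      (rfVar 4 ^ l * rfVar 3) ≠ 0 := by
  simp only [gustafsonFactor, rfVar, ← map_pow, ← map_mul,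
    ← map_one (algebraMap (MvPolynomial (Fin 5) ℚ) RatFunField), ← map_sub]
  exact algebraMap_ne_zero_of_eval_ne_zero ![0, 0, 1, 0, 1] (by simp)

/-- The solution of the Gustafson-type recurrence at `q = 0`: if
`I₀ = 1`, `I₁ = (1−abcd)/((1−ac)(1−bc)(1−cd)(1−ad)(1−bd))` and for `n ≥ 2`
`Iₙ(a,b;c,d) = c/((1−ac)(1−bc)(1−dc)(c−d))·I_{n−1}(a,b;tc,d)
             + d/((1−ad)(1−bd)(1−cd)(d−c))·I_{n−1}(a,b;c,td)`,
then `Iₙ(a,b;c,d) = ∏_{i=0}^{n−1} [(1−tⁱac)(1−tⁱbc)(1−tⁱcd)(1−tⁱad)(1−tⁱbd)]⁻¹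
                     · ∏_{j=n−1}^{2n−2} (1−tʲabcd)`. -/
theorem gustafson_recurrence_solution
    (I : ℕ → RatFunField → RatFunField → RatFunField)
    (h0 : ∀ c d : RatFunField, I 0 c d = 1)
    (h1 : ∀ c d : RatFunField, I 1 c d =
      (1 - rfVar 0 * rfVar 1 * c * d) /
        ((1 - rfVar 0 * c) * (1 - rfVar 1 * c) * (1 - c * d) *
          (1 - rfVar 0 * d) * (1 - rfVar 1 * d)))
    (hrec : ∀ n : ℕ, 2 ≤ n → ∀ c d : RatFunField, I n c d =
      c / ((1 - rfVar 0 * c) * (1 - rfVar 1 * c) * (1 - d * c) * (c - d)) *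
          I (n - 1) (rfVar 4 * c) d
      + d / ((1 - rfVar 0 * d) * (1 - rfVar 1 * d) * (1 - c * d) * (d - c)) *
          I (n - 1) c (rfVar 4 * d)) :
    ∀ n : ℕ, I n (rfVar 2) (rfVar 3) =
      (∏ i ∈ Finset.range n,
        ((1 - rfVar 4 ^ i * rfVar 0 * rfVar 2) * (1 - rfVar 4 ^ i * rfVar 1 * rfVar 2) *
         (1 - rfVar 4 ^ i * rfVar 2 * rfVar 3) * (1 - rfVar 4 ^ i * rfVar 0 * rfVar 3) *
         (1 - rfVar 4 ^ i * rfVar 1 * rfVar 3)))⁻¹ *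
      ∏ j ∈ Finset.Ico (n - 1) (2 * n - 1),
        (1 - rfVar 4 ^ j * rfVar 0 * rfVar 1 * rfVar 2 * rfVar 3) := by
  intro n
  simpa only [pow_zero, one_mul, gustafsonSolution, gustafsonDenom, gustafsonNumer,
    gustafsonFactor] using eq_gustafsonSolution_of_recurrence I h0 h1 hrec rfVar_shift_ne
    gustafsonFactor_rfVar_shift_ne_zero n 0 0
end

section
/- The constant term (integral over the n-torus against Haar measure) of the q=0 nonsymmetric Koornwinder density Δ_K^{(n)}(z;t;a,b,c,d) equals ∏_{i=0}^{n−1} [(1−t^i ac)(1−t^i bc)(1−t^i cd)(1−t^i ad)(1−t^i bd)]^{−1} · ∏_{j=n−1}^{2n−2} (1−t^j abcd), for parameters a, b, c, d, t of absolute value less than 1. -/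
/-!
Integrate out `z₁`. For `z₂, …, zₙ` on the torus, the `z₁`-integrand is
`z Φ(z) / ((z - c)(z - d))` with `Φ = nsKernel · ∏ⱼ nsPair(·, zⱼ)` holomorphic on the closed unit
disc, so Cauchy's formula evaluates it at `c` and `d`. Multiplying `∏ⱼ nsPair(c, zⱼ)` into the
density of the remaining variables turns `c` into `t c`, so the constant term `CTₙ(c, d)` obeys
`CTₙ₊₁(c, d) = ψ(c)/(c - d) · CTₙ(t c, d) + ψ(d)/(d - c) · CTₙ(c, t d)` with `ψ = nsKernel`.
The closed form satisfies the same recursion by a partial-fraction identity. At `c = d` the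
recursion degenerates, and both sides are continuous in `d`.
-/

open Finset MeasureTheory

/-- Normalized integral over the `n`-torus `{|z_i| = 1}` against Haar measure
`∏_j dz_j/(2πi z_j)`, parametrized by `z_i = e^{iθ_i}`. -/
noncomputable def torusInt (n : ℕ) (f : (Fin n → ℂ) → ℂ) : ℂ :=
  ((2 * Real.pi : ℂ))⁻¹ ^ n *
    ∫ θ : Fin n → ℝ in Set.univ.pi fun _ : Fin n => Set.Ioc (0 : ℝ) (2 * Real.pi),
      f fun i => Complex.exp (Complex.I * θ i)

/-- The `q = 0` nonsymmetric Koornwinder density `Δ_K^{(n)}(z;t;a,b,c,d)`. -/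
noncomputable def nsDensity (n : ℕ) (t a b c d : ℂ) (z : Fin n → ℂ) : ℂ :=
  (∏ i : Fin n, (1 - z i ^ 2) /
      ((1 - a * z i) * (1 - b * z i) * (1 - c * z i) * (1 - d * z i) *
        (1 - c * (z i)⁻¹) * (1 - d * (z i)⁻¹))) *
  ∏ i : Fin n, ∏ j : Fin n,
    if i < j then
      ((1 - z i * z j) * (1 - z i * (z j)⁻¹)) /
        ((1 - t * z i * z j) * (1 - t * z i * (z j)⁻¹))
    else 1

open Complex Metric Filter Topology
open scoped Real

lemma one_sub_ne_zero_of_norm_lt_one {w : ℂ} (h : ‖w‖ < 1) : 1 - w ≠ 0 :=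
  sub_ne_zero.2 (ne_of_apply_ne norm (by simpa using h.ne'))

lemma norm_mul_lt_one {x y : ℂ} (hx : ‖x‖ < 1) (hy : ‖y‖ ≤ 1) : ‖x * y‖ < 1 := by
  rw [norm_mul]
  exact mul_lt_one_of_nonneg_of_lt_one_left (norm_nonneg x) hx hy

lemma one_sub_mul_ne_zero {x y : ℂ} (hx : ‖x‖ < 1) (hy : ‖y‖ ≤ 1) : 1 - x * y ≠ 0 :=
  one_sub_ne_zero_of_norm_lt_one (norm_mul_lt_one hx hy)

lemma norm_pow_mul_lt_one {t x : ℂ} (ht : ‖t‖ ≤ 1) (hx : ‖x‖ < 1) (i : ℕ) : ‖t ^ i * x‖ < 1 := by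
  rw [norm_mul, norm_pow]
  exact mul_lt_one_of_nonneg_of_lt_one_right (pow_le_one₀ (norm_nonneg t) ht) (norm_nonneg x) hx

lemma eq_of_continuousAt_of_eventuallyEq_nhdsNE {X Y : Type*} [TopologicalSpace X]
    [TopologicalSpace Y] [T2Space Y] {x : X} [(𝓝[≠] x).NeBot] {f g : X → Y}
    (hf : ContinuousAt f x) (hg : ContinuousAt g x) (h : f =ᶠ[𝓝[≠] x] g) : f x = g x :=
  tendsto_nhds_unique (hf.tendsto.mono_left nhdsWithin_le_nhds)
    ((hg.tendsto.mono_left nhdsWithin_le_nhds).congr' h.symm)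

noncomputable def nsWeight (a b c d z : ℂ) : ℂ :=
  (1 - z ^ 2) /
    ((1 - a * z) * (1 - b * z) * (1 - c * z) * (1 - d * z) * (1 - c * z⁻¹) * (1 - d * z⁻¹))

noncomputable def nsPair (t x z : ℂ) : ℂ :=
  (1 - x * z) * (1 - x * z⁻¹) / ((1 - t * x * z) * (1 - t * x * z⁻¹))

noncomputable def nsKernel (a b c d z : ℂ) : ℂ :=
  z * (1 - z ^ 2) / ((1 - a * z) * (1 - b * z) * (1 - c * z) * (1 - d * z))

lemma nsDensity_swap (n : ℕ) (t a b c d : ℂ) : nsDensity n t a b c d = nsDensity n t a b d c := by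
  funext z
  unfold nsDensity
  congr 1
  exact prod_congr rfl fun i _ => by ring

lemma nsKernel_swap (a b c d : ℂ) : nsKernel a b c d = nsKernel a b d c := by
  funext z
  unfold nsKernel
  ring

section Algebra

variable {n : ℕ} {t a b c d : ℂ}

lemma nsDensity_cons (z : ℂ) (w : Fin n → ℂ) :
    nsDensity (n + 1) t a b c d (Fin.cons z w) =
      nsWeight a b c d z * (∏ j, nsPair t z (w j)) * nsDensity n t a b c d w := by
  simp only [nsDensity, nsWeight, nsPair, Fin.prod_univ_succ, Fin.cons_zero, Fin.cons_succ,
    Fin.succ_pos, Fin.not_lt_zero, Fin.succ_lt_succ_iff, if_true, if_false, one_mul]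
  ring

lemma nsWeight_eq_nsKernel {z : ℂ} (hz : z ≠ 0) :
    nsWeight a b c d z = z * nsKernel a b c d z / ((z - c) * (z - d)) := by
  have hc : 1 - c * z⁻¹ = (z - c) / z := by field_simp
  have hd : 1 - d * z⁻¹ = (z - d) / z := by field_simp
  rw [nsWeight, nsKernel, hc, hd]
  simp only [div_eq_mul_inv, mul_inv, inv_inv]
  ring

lemma nsPair_mul_nsWeight {z : ℂ} (hc : 1 - c * z ≠ 0) (hc' : 1 - c * z⁻¹ ≠ 0) :
    nsPair t c z * nsWeight a b c d z = nsWeight a b (t * c) d z := by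
  rw [nsPair, nsWeight, nsWeight, div_mul_div_comm,
    ← mul_div_mul_left (1 - z ^ 2) _ (mul_ne_zero hc hc')]
  congr 1
  ring

lemma prod_nsPair_mul_nsDensity (hc : ‖c‖ < 1) {w : Fin n → ℂ} (hw : ∀ j, ‖w j‖ = 1) :
    (∏ j, nsPair t c (w j)) * nsDensity n t a b c d w = nsDensity n t a b (t * c) d w := by
  rw [nsDensity, nsDensity, ← mul_assoc, ← prod_mul_distrib]
  congr 1
  exact prod_congr rfl fun j _ => nsPair_mul_nsWeight (one_sub_mul_ne_zero hc (hw j).le)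
    (one_sub_mul_ne_zero hc (by simp [hw j]))

end Algebra

noncomputable def qPochhammer (t x : ℂ) (n : ℕ) : ℂ := ∏ i ∈ range n, (1 - t ^ i * x)

noncomputable def nsConstantTerm (n : ℕ) (t a b c d : ℂ) : ℂ :=
  (∏ i ∈ Finset.range n,
      ((1 - t ^ i * a * c) * (1 - t ^ i * b * c) * (1 - t ^ i * c * d) *
       (1 - t ^ i * a * d) * (1 - t ^ i * b * d)))⁻¹ *
    ∏ j ∈ Finset.Ico (n - 1) (2 * n - 1), (1 - t ^ j * a * b * c * d)

section ConstantTerm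

variable {t a b c d : ℂ}

lemma qPochhammer_succ (t x : ℂ) (n : ℕ) :
    qPochhammer t x (n + 1) = qPochhammer t x n * (1 - t ^ n * x) :=
  prod_range_succ _ n

lemma qPochhammer_succ' (t x : ℂ) (n : ℕ) :
    qPochhammer t x (n + 1) = (1 - x) * qPochhammer t (t * x) n := by
  rw [qPochhammer, prod_range_succ', mul_comm, qPochhammer]
  simp only [pow_succ, pow_zero, one_mul, mul_assoc]

lemma qPochhammer_ne_zero {t x : ℂ} (ht : ‖t‖ ≤ 1) (hx : ‖x‖ < 1) (n : ℕ) :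
    qPochhammer t x n ≠ 0 :=
  prod_ne_zero_iff.2 fun i _ => one_sub_ne_zero_of_norm_lt_one (norm_pow_mul_lt_one ht hx i)

noncomputable def nsDenominator (n : ℕ) (t a b c d : ℂ) : ℂ :=
  qPochhammer t (a * c) n * qPochhammer t (b * c) n * qPochhammer t (c * d) n *
    qPochhammer t (a * d) n * qPochhammer t (b * d) n

lemma nsConstantTerm_eq (n : ℕ) (t a b c d : ℂ) :
    nsConstantTerm n t a b c d = (nsDenominator n t a b c d)⁻¹ *
      ∏ j ∈ Ico (n - 1) (2 * n - 1), (1 - t ^ j * (a * b * c * d)) := by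
  simp only [nsConstantTerm, nsDenominator, qPochhammer, ← prod_mul_distrib, mul_assoc]

lemma nsDenominator_swap (n : ℕ) (t a b c d : ℂ) :
    nsDenominator n t a b c d = nsDenominator n t a b d c := by
  simp only [nsDenominator, mul_comm d c]
  ring

lemma nsDenominator_succ (n : ℕ) (t a b c d : ℂ) :
    nsDenominator (n + 1) t a b c d =
      (1 - a * c) * (1 - b * c) * (1 - c * d) * (1 - t ^ n * (a * d)) * (1 - t ^ n * (b * d)) *
        nsDenominator n t a b (t * c) d := by
  simp only [nsDenominator, qPochhammer_succ' t (a * c), qPochhammer_succ' t (b * c),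
    qPochhammer_succ' t (c * d), qPochhammer_succ t (a * d), qPochhammer_succ t (b * d)]
  ring_nf

lemma nsDenominator_ne_zero (n : ℕ) (ht : ‖t‖ ≤ 1) (ha : ‖a‖ < 1) (hb : ‖b‖ < 1) (hc : ‖c‖ < 1)
    (hd : ‖d‖ < 1) : nsDenominator n t a b c d ≠ 0 := by
  have h := fun {x y : ℂ} (hx : ‖x‖ < 1) (hy : ‖y‖ < 1) =>
    qPochhammer_ne_zero ht (norm_mul_lt_one hx hy.le) n
  exact mul_ne_zero (mul_ne_zero (mul_ne_zero (mul_ne_zero (h ha hc) (h hb hc)) (h hc hd))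
    (h ha hd)) (h hb hd)

lemma nsDenominator_succ' (n : ℕ) (t a b c d : ℂ) :
    nsDenominator (n + 1) t a b c d =
      (1 - a * d) * (1 - b * d) * (1 - d * c) * (1 - t ^ n * (a * c)) * (1 - t ^ n * (b * c)) *
        nsDenominator n t a b c (t * d) := by
  rw [nsDenominator_swap, nsDenominator_succ, nsDenominator_swap n t a b]

lemma prod_Ico_one_sub_pow_mul_shift {t : ℂ} (n : ℕ) (x : ℂ) :
    ∏ j ∈ Ico (n - 1) (2 * n - 1), (1 - t ^ j * (t * x)) =
      ∏ j ∈ Ico n (2 * n), (1 - t ^ j * x) := by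
  rcases n with _ | n
  · simp
  · rw [show n + 1 - 1 = n by omega, show 2 * (n + 1) - 1 = 2 * n + 1 by omega,
      show 2 * (n + 1) = 2 * n + 1 + 1 by ring, ← prod_Ico_add' (fun j => 1 - t ^ j * x)]
    exact prod_congr rfl fun j _ => by ring

lemma nsKernel_self_mul (T : ℂ) (ha : 1 - a * c ≠ 0) (hb : 1 - b * c ≠ 0) (hc : 1 - c * c ≠ 0)
    (hd : 1 - d * c ≠ 0) :
    nsKernel a b c d c * ((1 - a * c) * (1 - b * c) * (1 - c * d) * (1 - T * (a * d)) *
      (1 - T * (b * d))) = c * (1 - T * (a * d)) * (1 - T * (b * d)) := by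
  rw [nsKernel, div_mul_eq_mul_div, div_eq_iff (by simp [*])]
  ring

lemma nsKernel_residue_sum (T : ℂ) (ha : ‖a‖ < 1) (hb : ‖b‖ < 1) (hc : ‖c‖ < 1) (hd : ‖d‖ < 1)
    (hcd : c ≠ d) :
    nsKernel a b c d c / (c - d) * ((1 - a * c) * (1 - b * c) * (1 - c * d) * (1 - T * (a * d)) *
        (1 - T * (b * d))) +
      nsKernel a b c d d / (d - c) * ((1 - a * d) * (1 - b * d) * (1 - d * c) *
        (1 - T * (a * c)) * (1 - T * (b * c))) = 1 - T ^ 2 * (a * b * c * d) := by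
  have h := fun {x y : ℂ} (hx : ‖x‖ < 1) (hy : ‖y‖ < 1) => one_sub_mul_ne_zero hx hy.le
  rw [div_mul_eq_mul_div, div_mul_eq_mul_div, nsKernel_self_mul T (h ha hc) (h hb hc) (h hc hc)
    (h hd hc), nsKernel_swap, nsKernel_self_mul T (h ha hd) (h hb hd) (h hd hd) (h hc hd),
    div_add_div _ _ (sub_ne_zero.2 hcd) (sub_ne_zero.2 hcd.symm),
    div_eq_iff (mul_ne_zero (sub_ne_zero.2 hcd) (sub_ne_zero.2 hcd.symm))]
  ring

lemma nsConstantTerm_succ (n : ℕ) (ht : ‖t‖ ≤ 1) (ha : ‖a‖ < 1) (hb : ‖b‖ < 1) (hc : ‖c‖ < 1)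
    (hd : ‖d‖ < 1) (hcd : c ≠ d) :
    nsConstantTerm (n + 1) t a b c d =
      nsKernel a b c d c / (c - d) * nsConstantTerm n t a b (t * c) d +
        nsKernel a b c d d / (d - c) * nsConstantTerm n t a b c (t * d) := by
  have h := fun {x y : ℂ} (hx : ‖x‖ < 1) (hy : ‖y‖ < 1) => one_sub_mul_ne_zero hx hy.le
  have hT := fun {x y : ℂ} (hx : ‖x‖ < 1) (hy : ‖y‖ < 1) =>
    one_sub_ne_zero_of_norm_lt_one (norm_pow_mul_lt_one ht (norm_mul_lt_one hx hy.le) n)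
  set X := a * b * c * d
  set Q := ∏ j ∈ Ico n (2 * n), (1 - t ^ j * X)
  have hQ : ∏ j ∈ Ico (n + 1 - 1) (2 * (n + 1) - 1), (1 - t ^ j * X) =
      Q * (1 - (t ^ n) ^ 2 * X) := by
    rw [show n + 1 - 1 = n by omega, show 2 * (n + 1) - 1 = 2 * n + 1 by omega,
      prod_Ico_succ_top (by omega), ← pow_mul, mul_comm n 2]
  have hQc : ∏ j ∈ Ico (n - 1) (2 * n - 1), (1 - t ^ j * (a * b * (t * c) * d)) = Q := by
    rw [show a * b * (t * c) * d = t * X by ring, prod_Ico_one_sub_pow_mul_shift]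
  have hQd : ∏ j ∈ Ico (n - 1) (2 * n - 1), (1 - t ^ j * (a * b * c * (t * d))) = Q := by
    rw [show a * b * c * (t * d) = t * X by ring, prod_Ico_one_sub_pow_mul_shift]
  have hinv_c : (nsDenominator n t a b (t * c) d)⁻¹ =
      (1 - a * c) * (1 - b * c) * (1 - c * d) * (1 - t ^ n * (a * d)) * (1 - t ^ n * (b * d)) *
        (nsDenominator (n + 1) t a b c d)⁻¹ := by
    rw [nsDenominator_succ, mul_inv, ← mul_assoc, mul_inv_cancel₀ (by simp [*]), one_mul]
  have hinv_d : (nsDenominator n t a b c (t * d))⁻¹ =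
      (1 - a * d) * (1 - b * d) * (1 - d * c) * (1 - t ^ n * (a * c)) * (1 - t ^ n * (b * c)) *
        (nsDenominator (n + 1) t a b c d)⁻¹ := by
    rw [nsDenominator_succ', mul_inv, ← mul_assoc, mul_inv_cancel₀ (by simp [*]), one_mul]
  rw [nsConstantTerm_eq, nsConstantTerm_eq, nsConstantTerm_eq, hQ, hQc, hQd, hinv_c, hinv_d,
    ← nsKernel_residue_sum (t ^ n) ha hb hc hd hcd]
  ring

end ConstantTerm

section TorusIntegral

variable {n : ℕ}

lemma torusInt_eq_integral_Icc (f : (Fin n → ℂ) → ℂ) :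
    torusInt n f = (2 * π : ℂ)⁻¹ ^ n *
      ∫ θ in Set.Icc 0 fun _ => 2 * π, f fun i => exp (I * θ i) := by
  rw [torusInt, ← Set.pi_univ_Icc]
  congr 2
  exact Measure.restrict_congr_set (Measure.ae_eq_set_pi fun _ _ => Ioc_ae_eq_Icc)

lemma torusInt_congr {f g : (Fin n → ℂ) → ℂ}
    (h : ∀ z : Fin n → ℂ, (∀ i, ‖z i‖ = 1) → f z = g z) : torusInt n f = torusInt n g := by
  unfold torusInt
  congr 2
  funext θ
  exact h _ fun i => norm_exp_I_mul_ofReal (θ i)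

lemma torusInt_const_mul (k : ℂ) (f : (Fin n → ℂ) → ℂ) :
    torusInt n (fun z => k * f z) = k * torusInt n f := by
  simp only [torusInt, integral_const_mul]
  ring

lemma torusInt_add {f g : (Fin n → ℂ) → ℂ}
    (hf : IntegrableOn (fun θ => f fun i => exp (I * θ i)) (Set.Icc 0 fun _ => 2 * π))
    (hg : IntegrableOn (fun θ => g fun i => exp (I * θ i)) (Set.Icc 0 fun _ => 2 * π)) :
    torusInt n (fun z => f z + g z) = torusInt n f + torusInt n g := by
  simp only [torusInt_eq_integral_Icc, integral_add hf hg, mul_add]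

lemma torusInt_zero (f : (Fin 0 → ℂ) → ℂ) : torusInt 0 f = f ![] := by
  simp [torusInt, Subsingleton.elim _ ![], measureReal_def, volume_pi_pi]

lemma torusInt_succ {f : (Fin (n + 1) → ℂ) → ℂ}
    (hf : IntegrableOn (fun θ => f fun i => exp (I * θ i)) (Set.Icc 0 fun _ => 2 * π)) :
    torusInt (n + 1) f = torusInt n fun w =>
      (2 * π : ℂ)⁻¹ * ∫ x in Set.Icc 0 (2 * π), f (Fin.cons (exp (I * x)) w) := by
  set e : ℝ × (Fin n → ℝ) ≃ᵐ (Fin (n + 1) → ℝ) :=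
    (MeasurableEquiv.piFinSuccAbove (fun _ => ℝ) 0).symm
  have hem : MeasurePreserving e :=
    (volume_preserving_piFinSuccAbove (fun _ : Fin (n + 1) => ℝ) 0).symm _
  have heπ : e ⁻¹' (Set.Icc 0 fun _ => 2 * π) = Set.Icc 0 (2 * π) ×ˢ Set.Icc 0 fun _ => 2 * π :=
    ((Fin.insertNthOrderIso (fun _ => ℝ) 0).preimage_Icc _ _).trans (Set.Icc_prod_eq _ _)
  have he : ∀ x y,
      (fun i => exp (I * e (x, y) i)) = Fin.cons (exp (I * x)) fun j => exp (I * y j) := by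
    intro x y
    ext i
    refine Fin.cases ?_ (fun j => ?_) i <;> simp [e, Fin.insertNthEquiv]
  have hF := hf
  rw [← hem.integrableOn_comp_preimage e.measurableEmbedding, heπ, Measure.volume_eq_prod] at hF
  rw [torusInt_eq_integral_Icc, torusInt_eq_integral_Icc, ← hem.map_eq, setIntegral_map_equiv, heπ,
    Measure.volume_eq_prod, ← setIntegral_prod_swap,
    setIntegral_prod (fun z => f fun i => exp (I * e z.swap i)) hF.swap,
    integral_const_mul, pow_succ, mul_assoc]
  congr 2
  refine setIntegral_congr_fun measurableSet_Icc fun y _ => ?_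
  simp only [Prod.swap_prod_mk, he]

lemma continuousOn_torusInt {U : Set ℂ} (hU : IsOpen U) {f : ℂ → (Fin n → ℂ) → ℂ}
    (hf : ∀ p ∈ U, ∀ z : Fin n → ℂ, (∀ i, ‖z i‖ = 1) →
      ContinuousAt (fun q : ℂ × (Fin n → ℂ) => f q.1 q.2) (p, z)) :
    ContinuousOn (fun p => torusInt n (f p)) U := by
  have := hU.locallyCompactSpace
  simp only [torusInt_eq_integral_Icc]
  refine continuousOn_const.mul ?_
  rw [continuousOn_iff_continuous_domRestrict]
  refine continuous_parametric_integral_of_continuous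
    (f := fun (p : U) (θ : Fin n → ℝ) => f p fun i => exp (I * θ i)) ?_ isCompact_Icc
  refine continuous_iff_continuousAt.2 fun ⟨⟨p, hp⟩, θ⟩ => ?_
  exact (hf p hp _ fun i => norm_exp_I_mul_ofReal (θ i)).comp
    (f := fun q : U × (Fin n → ℝ) => ((q.1 : ℂ), fun i => exp (I * q.2 i)))
    (x := (⟨p, hp⟩, θ)) (by fun_prop)

end TorusIntegral

lemma setIntegral_Icc_exp_mul_div_sub_mul_sub {Φ : ℂ → ℂ} (hΦ : DiffContOnCl ℂ Φ (ball 0 1))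
    {c d : ℂ} (hc : ‖c‖ < 1) (hd : ‖d‖ < 1) (hcd : c ≠ d) :
    ∫ θ in Set.Icc 0 (2 * π),
        exp (I * θ) * Φ (exp (I * θ)) / ((exp (I * θ) - c) * (exp (I * θ) - d)) =
      2 * π * ((Φ c - Φ d) / (c - d)) := by
  have hne : ∀ z : ℂ, ‖z‖ = 1 → ∀ w : ℂ, ‖w‖ < 1 → z - w ≠ 0 := fun z hz w hw h => by
    rw [sub_eq_zero] at h; rw [h] at hz; linarith
  have hint : ∀ w : ℂ, ‖w‖ < 1 → CircleIntegrable (fun z => (z - w)⁻¹ • Φ z) 0 1 := by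
    refine fun w hw => ContinuousOn.circleIntegrable zero_le_one ?_
    refine ((continuousOn_id.sub continuousOn_const).inv₀ fun z hz => ?_).smul
      (hΦ.continuousOn.mono ?_)
    · exact hne z (by simpa using hz) w hw
    · rw [closure_ball 0 one_ne_zero]; exact sphere_subset_closedBall
  have hcirc := congrArg₂ (· - ·) (hΦ.circleIntegral_sub_inv_smul (mem_ball_zero_iff.2 hc))
    (hΦ.circleIntegral_sub_inv_smul (mem_ball_zero_iff.2 hd))
  rw [← circleIntegral.integral_sub (hint c hc) (hint d hd), circleIntegral_def_Icc,
    setIntegral_congr_fun measurableSet_Icc (g := fun θ : ℝ => I * (c - d) *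
      (exp (I * θ) * Φ (exp (I * θ)) / ((exp (I * θ) - c) * (exp (I * θ) - d)))) ?_,
    integral_const_mul, smul_eq_mul, smul_eq_mul] at hcirc
  · have := sub_ne_zero.2 hcd
    field_simp
    exact mul_left_cancel₀ I_ne_zero (by linear_combination hcirc)
  · intro θ _
    simp only [deriv_circleMap, circleMap_zero, ofReal_one, one_mul, smul_eq_mul]
    rw [mul_comm (θ : ℂ) I]
    have hz := norm_exp_I_mul_ofReal θ
    have := hne _ hz c hc
    have := hne _ hz d hd
    field_simp
    ring

section Density

variable {n : ℕ} {t a b c d : ℂ}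

lemma differentiableAt_nsDensity (ht : ‖t‖ < 1) (ha : ‖a‖ < 1) (hb : ‖b‖ < 1) (hc : ‖c‖ < 1)
    (hd : ‖d‖ < 1) {z : Fin n → ℂ} (hz : ∀ i, ‖z i‖ = 1) :
    DifferentiableAt ℂ (fun p : ℂ × (Fin n → ℂ) => nsDensity n t a b c p.1 p.2) (d, z) := by
  have hz0 : ∀ i, z i ≠ 0 := fun i h => by simpa [h] using hz i
  unfold nsDensity
  simp only [← prod_filter]
  fun_prop (disch := dsimp only; first
    | exact hz0 _
    | simp only [mul_assoc]; (repeat' apply mul_ne_zero) <;>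
        exact one_sub_mul_ne_zero ‹_› (by simp [hz]))

lemma continuous_nsDensity_exp (ht : ‖t‖ < 1) (ha : ‖a‖ < 1) (hb : ‖b‖ < 1) (hc : ‖c‖ < 1)
    (hd : ‖d‖ < 1) : Continuous fun θ : Fin n → ℝ => nsDensity n t a b c d fun i => exp (I * θ i) :=
  continuous_iff_continuousAt.2 fun θ =>
    (differentiableAt_nsDensity ht ha hb hc hd fun i =>
      norm_exp_I_mul_ofReal (θ i)).continuousAt.comp
      (f := fun θ : Fin n → ℝ => (d, fun i => exp (I * θ i))) (x := θ)
      (Continuous.continuousAt (by fun_prop))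

lemma diffContOnCl_nsKernel_mul_prod_nsPair (ht : ‖t‖ < 1) (ha : ‖a‖ < 1) (hb : ‖b‖ < 1)
    (hc : ‖c‖ < 1) (hd : ‖d‖ < 1) {w : Fin n → ℂ} (hw : ∀ j, ‖w j‖ = 1) :
    DiffContOnCl ℂ (fun z => nsKernel a b c d z * ∏ j, nsPair t z (w j)) (ball 0 1) := by
  refine DifferentiableOn.diffContOnCl ?_
  rw [closure_ball 0 one_ne_zero]
  intro z hz
  replace hz : ‖z‖ ≤ 1 := by simpa using hz
  refine DifferentiableAt.differentiableWithinAt ?_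
  unfold nsKernel nsPair
  fun_prop (disch := simp only [mul_assoc]; (repeat' apply mul_ne_zero) <;>
    first | exact one_sub_mul_ne_zero ‹_› hz | exact one_sub_mul_ne_zero ht (by simp [hw, hz]))

lemma setIntegral_Icc_nsWeight_mul_prod_nsPair (ht : ‖t‖ < 1) (ha : ‖a‖ < 1) (hb : ‖b‖ < 1)
    (hc : ‖c‖ < 1) (hd : ‖d‖ < 1) (hcd : c ≠ d) {w : Fin n → ℂ} (hw : ∀ j, ‖w j‖ = 1) :
    ∫ x in Set.Icc 0 (2 * π), nsWeight a b c d (exp (I * x)) * ∏ j, nsPair t (exp (I * x)) (w j) =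
      2 * π * (nsKernel a b c d c / (c - d) * ∏ j, nsPair t c (w j) +
        nsKernel a b c d d / (d - c) * ∏ j, nsPair t d (w j)) := by
  rw [setIntegral_congr_fun measurableSet_Icc fun x _ => by
      rw [nsWeight_eq_nsKernel (exp_ne_zero _), div_mul_eq_mul_div, mul_assoc],
    setIntegral_Icc_exp_mul_div_sub_mul_sub
      (diffContOnCl_nsKernel_mul_prod_nsPair ht ha hb hc hd hw) hc hd hcd,
    ← neg_sub c d, div_neg]
  ring

end Density

section Main

variable {t a b c d : ℂ}

lemma continuousAt_nsConstantTerm (n : ℕ) (ht : ‖t‖ ≤ 1) (ha : ‖a‖ < 1) (hb : ‖b‖ < 1)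
    (hc : ‖c‖ < 1) (hd : ‖d‖ < 1) : ContinuousAt (nsConstantTerm n t a b c) d := by
  rw [show nsConstantTerm n t a b c = _ from funext (nsConstantTerm_eq n t a b c)]
  have := nsDenominator_ne_zero n ht ha hb hc hd
  unfold nsDenominator qPochhammer at this ⊢
  fun_prop (disch := exact this)

lemma torusInt_nsDensity_succ {n : ℕ} (ht : ‖t‖ < 1) (ha : ‖a‖ < 1) (hb : ‖b‖ < 1)
    (hc : ‖c‖ < 1) (hd : ‖d‖ < 1) (hcd : c ≠ d) :
    torusInt (n + 1) (nsDensity (n + 1) t a b c d) =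
      nsKernel a b c d c / (c - d) * torusInt n (nsDensity n t a b (t * c) d) +
        nsKernel a b c d d / (d - c) * torusInt n (nsDensity n t a b c (t * d)) := by
  have htc : ‖t * c‖ < 1 := norm_mul_lt_one ht hc.le
  have htd : ‖t * d‖ < 1 := norm_mul_lt_one ht hd.le
  rw [torusInt_succ (continuous_nsDensity_exp ht ha hb hc hd).integrableOn_Icc,
    ← torusInt_const_mul, ← torusInt_const_mul,
    ← torusInt_add (f := fun z => _ * nsDensity n t a b (t * c) d z)
      (g := fun z => _ * nsDensity n t a b c (t * d) z)
      ((continuous_nsDensity_exp ht ha hb htc hd).integrableOn_Icc.const_mul _)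
      ((continuous_nsDensity_exp ht ha hb hc htd).integrableOn_Icc.const_mul _)]
  refine torusInt_congr fun w hw => ?_
  simp only [nsDensity_cons, integral_mul_const]
  rw [setIntegral_Icc_nsWeight_mul_prod_nsPair ht ha hb hc hd hcd hw,
    ← prod_nsPair_mul_nsDensity hc hw, nsDensity_swap n t a b c (t * d),
    ← prod_nsPair_mul_nsDensity hd hw, nsDensity_swap n t a b d c]
  field_simp

theorem torusInt_nsDensity (n : ℕ) (ht : ‖t‖ < 1) (ha : ‖a‖ < 1) (hb : ‖b‖ < 1) (hc : ‖c‖ < 1)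
    (hd : ‖d‖ < 1) : torusInt n (nsDensity n t a b c d) = nsConstantTerm n t a b c d := by
  induction n generalizing c d with
  | zero => simp [torusInt_zero, nsDensity, nsConstantTerm]
  | succ n ih =>
    have generic : ∀ d', ‖d'‖ < 1 → c ≠ d' →
        torusInt (n + 1) (nsDensity (n + 1) t a b c d') = nsConstantTerm (n + 1) t a b c d' :=
      fun d' hd' hcd => by
        rw [torusInt_nsDensity_succ ht ha hb hc hd' hcd,
          nsConstantTerm_succ n ht.le ha hb hc hd' hcd,
          ih (norm_mul_lt_one ht hc.le) hd', ih hc (norm_mul_lt_one ht hd'.le)]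
    rcases ne_or_eq c d with hcd | rfl
    · exact generic d hd hcd
    have hball : ball (0 : ℂ) 1 ∈ 𝓝 c := isOpen_ball.mem_nhds (mem_ball_zero_iff.2 hc)
    refine eq_of_continuousAt_of_eventuallyEq_nhdsNE (f := fun d => torusInt (n + 1) _)
      ((continuousOn_torusInt isOpen_ball fun d hd z hz =>
        (differentiableAt_nsDensity ht ha hb hc (mem_ball_zero_iff.1 hd) hz).continuousAt)
          |>.continuousAt hball)
      (continuousAt_nsConstantTerm _ ht.le ha hb hc hc) ?_
    filter_upwards [self_mem_nhdsWithin, nhdsWithin_le_nhds hball] with d hne hd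
    exact generic d (mem_ball_zero_iff.1 hd) (Ne.symm hne)

end Main

/-- The constant term of the `q = 0` nonsymmetric Koornwinder density equals
`∏_{i=0}^{n−1} [(1−tⁱac)(1−tⁱbc)(1−tⁱcd)(1−tⁱad)(1−tⁱbd)]⁻¹ · ∏_{j=n−1}^{2n−2}(1−tʲabcd)`. -/
theorem nonsymmetric_constant_term (n : ℕ) (t a b c d : ℂ)
    (ha : ‖a‖ < 1) (hb : ‖b‖ < 1) (hc : ‖c‖ < 1) (hd : ‖d‖ < 1) (ht : ‖t‖ < 1) :
    torusInt n (nsDensity n t a b c d)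
    = (∏ i ∈ Finset.range n,
        ((1 - t ^ i * a * c) * (1 - t ^ i * b * c) * (1 - t ^ i * c * d) *
         (1 - t ^ i * a * d) * (1 - t ^ i * b * d)))⁻¹ *
      ∏ j ∈ Finset.Ico (n - 1) (2 * n - 1), (1 - t ^ j * a * b * c * d) :=
  torusInt_nsDensity n ht ha hb hc hd
end

section
/- For n = 1, the integral over the unit circle of (1−z²)z / [(1−az)(1−bz)(1−cz)(1−dz)(z−c)(z−d)] · dz/(2πi) equals (1−abcd)/[(1−ac)(1−bc)(1−cd)(1−ad)(1−bd)], for parameters a, b, c, d of absolute value less than 1 with c ≠ d. -/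
/-!
Write the integrand as `((z - c) (z - d))⁻¹ g(z)` with
`g(z) = (1 - z²) z / ((1 - az)(1 - bz)(1 - cz)(1 - dz))` (`regularPart a b c d`), which is
holomorphic on a neighbourhood of the closed unit disc. Partial fractions and Cauchy's integral
formula at `c` and at `d` turn `(2πi)⁻¹ ∮` into the divided difference `(g(c) - g(d)) / (c - d)`;
after cancelling `1 - c²` and `1 - d²` this is a rational identity.
-/

open Complex Metric

theorem one_sub_mul_ne_zero_of_norm_lt_one {R : Type*} [NormedRing R] [NormOneClass R] {x y : R}
    (hx : ‖x‖ < 1) (hy : ‖y‖ ≤ 1) : 1 - x * y ≠ 0 := by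
  intro h
  have hxy : ‖x * y‖ < ‖(1 : R)‖ := by
    rw [norm_one]
    calc ‖x * y‖ ≤ ‖x‖ * ‖y‖ := norm_mul_le x y
      _ < 1 := by nlinarith [norm_nonneg x, norm_nonneg y]
  rw [← sub_eq_zero.mp h] at hxy
  exact lt_irrefl _ hxy

section TwoPoles

variable {E : Type*} [NormedAddCommGroup E] [NormedSpace ℂ E]
  {R : ℝ} {c w w' : ℂ} {f : ℂ → E}

theorem DiffContOnCl.circleIntegrable_sub_inv_smul (h : DiffContOnCl ℂ f (ball c R))
    (hw : w ∈ ball c R) : CircleIntegrable (fun z => (z - w)⁻¹ • f z) c R := by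
  refine ContinuousOn.circleIntegrable (dist_nonneg.trans (mem_ball.mp hw).le) ?_
  refine ((continuousOn_id.sub continuousOn_const).inv₀ fun z hz => ?_).smul
    (h.continuousOn_ball.mono sphere_subset_closedBall)
  exact sub_ne_zero.mpr (sphere_disjoint_ball.ne_of_mem hz hw)

theorem DiffContOnCl.circleIntegral_sub_inv_mul_sub_inv_smul [CompleteSpace E]
    (h : DiffContOnCl ℂ f (ball c R))
    (hw : w ∈ ball c R) (hw' : w' ∈ ball c R) (hne : w ≠ w') :
    (∮ z in C(c, R), ((z - w) * (z - w'))⁻¹ • f z) =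
      (2 * Real.pi * I : ℂ) • (w - w')⁻¹ • (f w - f w') := by
  have hR : 0 ≤ R := dist_nonneg.trans (mem_ball.mp hw).le
  have partial_fractions : Set.EqOn (fun z => ((z - w) * (z - w'))⁻¹ • f z)
      (fun z => (w - w')⁻¹ • ((z - w)⁻¹ • f z - (z - w')⁻¹ • f z)) (sphere c R) := by
    intro z hz
    have hzw : z - w ≠ 0 := sub_ne_zero.mpr (sphere_disjoint_ball.ne_of_mem hz hw)
    have hzw' : z - w' ≠ 0 := sub_ne_zero.mpr (sphere_disjoint_ball.ne_of_mem hz hw')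
    have hww' : w - w' ≠ 0 := sub_ne_zero.mpr hne
    simp only [smul_smul, ← sub_smul]
    congr 1
    field_simp
    ring
  rw [circleIntegral.integral_congr hR partial_fractions, circleIntegral.integral_smul,
    circleIntegral.integral_sub (h.circleIntegrable_sub_inv_smul hw)
      (h.circleIntegrable_sub_inv_smul hw'),
    h.circleIntegral_sub_inv_smul hw, h.circleIntegral_sub_inv_smul hw', ← smul_sub,
    smul_comm]

end TwoPoles

noncomputable def regularPart (a b c d z : ℂ) : ℂ :=
  (1 - z ^ 2) * z / ((1 - a * z) * (1 - b * z) * (1 - c * z) * (1 - d * z))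

theorem regularPart_diffContOnCl {a b c d : ℂ} (ha : ‖a‖ < 1) (hb : ‖b‖ < 1) (hc : ‖c‖ < 1)
    (hd : ‖d‖ < 1) : DiffContOnCl ℂ (regularPart a b c d) (ball 0 1) := by
  refine DifferentiableOn.diffContOnCl fun z hz => ?_
  have hz : ‖z‖ ≤ 1 := by rwa [closure_ball 0 one_ne_zero, mem_closedBall_zero_iff] at hz
  have hden : (1 - a * z) * (1 - b * z) * (1 - c * z) * (1 - d * z) ≠ 0 := by
    simp only [ne_eq, mul_eq_zero, not_or]
    exact ⟨⟨⟨one_sub_mul_ne_zero_of_norm_lt_one ha hz, one_sub_mul_ne_zero_of_norm_lt_one hb hz⟩,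
      one_sub_mul_ne_zero_of_norm_lt_one hc hz⟩, one_sub_mul_ne_zero_of_norm_lt_one hd hz⟩
  refine DifferentiableAt.differentiableWithinAt ?_
  unfold regularPart
  fun_prop (disch := exact hden)

theorem regularPart_divided_difference {a b c d : ℂ} (ha : ‖a‖ < 1) (hb : ‖b‖ < 1)
    (hc : ‖c‖ < 1) (hd : ‖d‖ < 1) (hcd : c ≠ d) :
    (c - d)⁻¹ * (regularPart a b c d c - regularPart a b c d d) =
      (1 - a * b * c * d) /
        ((1 - a * c) * (1 - b * c) * (1 - c * d) * (1 - a * d) * (1 - b * d)) := by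
  have hca := one_sub_mul_ne_zero_of_norm_lt_one hc ha.le
  have hcb := one_sub_mul_ne_zero_of_norm_lt_one hc hb.le
  have hda := one_sub_mul_ne_zero_of_norm_lt_one hd ha.le
  have hdb := one_sub_mul_ne_zero_of_norm_lt_one hd hb.le
  have hcc : 1 - c ^ 2 ≠ 0 := sq c ▸ one_sub_mul_ne_zero_of_norm_lt_one hc hc.le
  have hdd : 1 - d ^ 2 ≠ 0 := sq d ▸ one_sub_mul_ne_zero_of_norm_lt_one hd hd.le
  unfold regularPart
  field_simp
  ring

/-- The `n = 1` base case of the recurrence: by the residue theorem,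
`(2πi)⁻¹ ∮_{|z|=1} (1−z²)z/[(1−az)(1−bz)(1−cz)(1−dz)(z−c)(z−d)] dz
  = (1−abcd)/[(1−ac)(1−bc)(1−cd)(1−ad)(1−bd)]`. -/
theorem base_case_contour_integral (a b c d : ℂ)
    (ha : ‖a‖ < 1) (hb : ‖b‖ < 1) (hc : ‖c‖ < 1) (hd : ‖d‖ < 1) (hcd : c ≠ d) :
    (2 * Real.pi * Complex.I)⁻¹ *
      (∮ z in C((0 : ℂ), 1),
        (1 - z ^ 2) * z /
          ((1 - a * z) * (1 - b * z) * (1 - c * z) * (1 - d * z) * (z - c) * (z - d)))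
    = (1 - a * b * c * d) /
        ((1 - a * c) * (1 - b * c) * (1 - c * d) * (1 - a * d) * (1 - b * d)) := by
  have hintegrand : (fun z : ℂ => (1 - z ^ 2) * z /
      ((1 - a * z) * (1 - b * z) * (1 - c * z) * (1 - d * z) * (z - c) * (z - d))) =
      fun z => ((z - c) * (z - d))⁻¹ • regularPart a b c d z := by
    funext z
    simp only [regularPart, smul_eq_mul, div_eq_mul_inv, mul_inv]
    ring
  have hball : ∀ {w : ℂ}, ‖w‖ < 1 → w ∈ ball (0 : ℂ) 1 := mem_ball_zero_iff.mpr
  have h2πI : (2 * Real.pi * I : ℂ) ≠ 0 := by simp [Real.pi_ne_zero]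
  rw [hintegrand, (regularPart_diffContOnCl ha hb hc hd).circleIntegral_sub_inv_mul_sub_inv_smul
    (hball hc) (hball hd) hcd, smul_eq_mul, smul_eq_mul, inv_mul_cancel_left₀ h2πI,
    regularPart_divided_difference ha hb hc hd hcd]
end

section
/- Let λ be a partition with at most n parts and μ ∈ ℤⁿ with μ ≺ λ. Then the inner product ⟨E_λ^{(n)}(z;c,d), z^μ⟩₀ = ∫_T E_λ^{(n)}(z;c,d) z^{−μ} Δ_K^{(n)}(z;t;a,b,c,d) dT vanishes. -/
open Finset MeasureTheory

/-- The decreasing rearrangement of the absolute values of the entries of `μ` (`μ⁺`). -/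
noncomputable def dplus {n : ℕ} (μ : Fin n → ℤ) : Fin n → ℤ :=
  fun i => -(((fun j => -|μ j|) ∘ Tuple.sort fun j => -|μ j|) i)

/-- Dominance order on `ℤⁿ`: all partial sums of `μ` are at most those of `lam`. -/
def domLE {n : ℕ} (μ lam : Fin n → ℤ) : Prop :=
  ∀ k : ℕ,
    ∑ i ∈ Finset.univ.filter (fun i : Fin n => (i : ℕ) < k), μ i ≤
    ∑ i ∈ Finset.univ.filter (fun i : Fin n => (i : ℕ) < k), lam i

/-- The order `≺` on compositions. -/
noncomputable def precOrd {n : ℕ} (μ lam : Fin n → ℤ) : Prop :=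
  μ ≠ lam ∧
    ((domLE (dplus μ) (dplus lam) ∧ dplus μ ≠ dplus lam) ∨
      (dplus μ = dplus lam ∧ domLE μ lam))

/-- `lam` is a partition: weakly decreasing with nonnegative entries. -/
def isPartition {n : ℕ} (lam : Fin n → ℤ) : Prop :=
  (∀ i, 0 ≤ lam i) ∧ ∀ i j : Fin n, i ≤ j → lam j ≤ lam i

/-- The nonsymmetric polynomial `E_λ^{(n)}(z;c,d) = ∏_{λ_i>0} z_i^{λ_i}(1−cz_i⁻¹)(1−dz_i⁻¹)`. -/
noncomputable def Epoly (n : ℕ) (lam : Fin n → ℤ) (c d : ℂ) (z : Fin n → ℂ) : ℂ :=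
  ∏ i ∈ Finset.univ.filter fun i : Fin n => 0 < lam i,
    z i ^ lam i * (1 - c * (z i)⁻¹) * (1 - d * (z i)⁻¹)

/-!
On the torus `E_λ Δ_K = z^λ R(z)`, where `R` is the density with the factors
`(1 - c/z_i)(1 - d/z_i)` removed for `λ_i > 0`. Each remaining factor of `R` is `1 - z^ν` or a
geometric series `∑ αᵏ z^{kν}` with `|α| < 1`, and all these exponents `ν` lie in the monoid of
`ν` with `ν_1 + ⋯ + ν_j ≥ 0` whenever `λ_j > 0` (the inverse powers `z_i⁻¹` only occur where
`λ_i = 0`, i.e. after the last positive part). So `R` is a uniform limit of Laurent polynomials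
with exponents in this monoid, and the integral is the coefficient of `z^{μ-λ}` in `R`.

It vanishes because `μ - λ` is not in the monoid: otherwise the partial sums of `λ` are at most
those of `|μ|`, hence of `μ⁺`, hence (by `μ ≺ λ`) of `λ`. So `|μ| = λ`, and equality of the
partial sums through each positive part of `λ` forces `μ = λ`.
-/

open scoped BoundedContinuousFunction

namespace BoundedContinuousFunction

variable {X 𝕜 E : Type*} [MeasurableSpace X] [TopologicalSpace X] [OpensMeasurableSpace X]
  [NontriviallyNormedField 𝕜] [NormedAddCommGroup E] [NormedSpace ℝ E] [NormedSpace 𝕜 E]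
  [SMulCommClass ℝ 𝕜 E] [SecondCountableTopology E] [MeasurableSpace E] [BorelSpace E]

noncomputable def integralCLM (μ : Measure X) [IsFiniteMeasure μ] : (X →ᵇ E) →L[𝕜] E :=
  LinearMap.mkContinuous
    { toFun f := ∫ x, f x ∂μ
      map_add' f g := integral_add (f.integrable μ) (g.integrable μ)
      map_smul' c f := integral_smul c f }
    (μ.real Set.univ) (norm_integral_le_mul_norm μ)

lemma integralCLM_apply (μ : Measure X) [IsFiniteMeasure μ] (f : X →ᵇ E) :
    integralCLM (𝕜 := 𝕜) μ f = ∫ x, f x ∂μ :=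
  rfl

end BoundedContinuousFunction

lemma Subalgebra.fun_prod_mem {R X ι : Type*} [CommSemiring R] {A : Subalgebra R (X → R)}
    (s : Finset ι) {f : ι → X → R} (h : ∀ i ∈ s, f i ∈ A) : (fun x => ∏ i ∈ s, f i x) ∈ A := by
  simpa [Finset.prod_fn] using A.prod_mem h

namespace Koornwinder

variable {n : ℕ}

def partialSum (ν : Fin n → ℤ) (k : ℕ) : ℤ :=
  ∑ i ∈ univ.filter (fun i : Fin n => (i : ℕ) < k), ν i

lemma partialSum_sub (ν κ : Fin n → ℤ) (k : ℕ) :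
    partialSum (ν - κ) k = partialSum ν k - partialSum κ k :=
  sum_sub_distrib _ _

lemma partialSum_single (i : Fin n) (m : ℤ) (k : ℕ) :
    partialSum (Pi.single i m) k = if (i : ℕ) < k then m else 0 := by
  simp [partialSum, sum_pi_single']

lemma partialSum_succ (ν : Fin n → ℤ) (k : ℕ) :
    partialSum ν (k + 1) = partialSum ν k + if h : k < n then ν ⟨k, h⟩ else 0 := by
  split_ifs with h
  · rw [partialSum, partialSum, ← sum_erase_add _ _ (by simp : (⟨k, h⟩ : Fin n) ∈ _)]
    congr 2
    ext i
    simp only [Order.lt_add_one_iff, mem_erase, ne_eq, Fin.ext_iff, mem_filter, mem_univ,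
      true_and]
    omega
  · rw [add_zero, partialSum, partialSum]
    congr 1
    ext i
    simp only [mem_filter, mem_univ, true_and]
    omega

lemma partialSum_eq_sum_mul (ν : Fin n → ℤ) (k : ℕ) :
    partialSum ν k = ∑ i : Fin n, (if (i : ℕ) < k then 1 else 0) * ν i := by
  simp [partialSum, sum_filter]

lemma eq_of_forall_partialSum_eq {ν κ : Fin n → ℤ} (h : ∀ k, partialSum ν k = partialSum κ k) :
    ν = κ := by
  funext i
  have hi := h (i + 1)
  rw [partialSum_succ, partialSum_succ, dif_pos i.2, h i] at hi
  simpa using hi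

lemma dplus_apply (μ : Fin n → ℤ) (i : Fin n) :
    dplus μ i = |μ (Tuple.sort (fun j => -|μ j|) i)| := by
  simp [dplus]

lemma antitone_dplus (μ : Fin n → ℤ) : Antitone (dplus μ) := fun i j hij => by
  have h := Tuple.monotone_sort (fun j => -|μ j|) hij
  simp only [Function.comp_apply] at h
  simp only [dplus, Function.comp_apply]
  omega

lemma dplus_of_isPartition {lam : Fin n → ℤ} (hlam : isPartition lam) : dplus lam = lam := by
  have hmono : Monotone fun j => -|lam j| := fun i j hij => by
    simpa [abs_of_nonneg (hlam.1 _)] using hlam.2 i j hij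
  funext i
  rw [dplus_apply, Tuple.sort_eq_refl_iff_monotone.mpr hmono, Equiv.refl_apply,
    abs_of_nonneg (hlam.1 i)]

/-- Rearrangement inequality: `dplus μ` lists the `|μ i|` in decreasing order. -/
lemma partialSum_abs_le_partialSum_dplus (μ : Fin n → ℤ) (k : ℕ) :
    partialSum (fun i => |μ i|) k ≤ partialSum (dplus μ) k := by
  set σ := Tuple.sort fun j => -|μ j|
  have hanti : Antitone fun i : Fin n => if (i : ℕ) < k then (1 : ℤ) else 0 := fun i j hij => by
    have : (i : ℕ) ≤ j := hij
    dsimp only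
    split_ifs <;> omega
  have habs : ∀ i, |μ i| = dplus μ (σ.symm i) := fun i => by
    rw [dplus_apply, Equiv.apply_symm_apply]
  simp only [partialSum_eq_sum_mul, habs]
  exact (hanti.monovary (antitone_dplus μ)).sum_mul_comp_perm_le_sum_mul

def exponentCone (lam : Fin n → ℤ) : AddSubmonoid (Fin n → ℤ) where
  carrier := {ν | ∀ j : Fin n, 0 < lam j → 0 ≤ partialSum ν (j + 1)}
  add_mem' {ν κ} hν hκ j hj := by
    simpa [partialSum, sum_add_distrib] using add_nonneg (hν j hj) (hκ j hj)
  zero_mem' j _ := by simp [partialSum]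

lemma single_mem_exponentCone (lam : Fin n → ℤ) (i : Fin n) {m : ℤ} (hm : 0 ≤ m) :
    Pi.single i m ∈ exponentCone lam := fun j _ => by
  rw [partialSum_single]
  split_ifs <;> omega

lemma single_mem_exponentCone_of_not_pos {lam : Fin n → ℤ} (hlam : Antitone lam) {i : Fin n}
    (hi : ¬ 0 < lam i) (m : ℤ) : Pi.single i m ∈ exponentCone lam := fun j hj => by
  have hji : ¬ (i : ℕ) < j + 1 := fun h =>
    hi (hj.trans_le (hlam (Fin.le_def.mpr (by omega))))
  rw [partialSum_single, if_neg hji]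

lemma single_sub_single_mem_exponentCone (lam : Fin n → ℤ) {i j : Fin n} (hij : i < j)
    {m : ℤ} (hm : 0 ≤ m) : Pi.single i m - Pi.single j m ∈ exponentCone lam := fun k _ => by
  have : (i : ℕ) < j := hij
  rw [partialSum_sub, partialSum_single, partialSum_single]
  split_ifs <;> omega

lemma partialSum_le_partialSum_abs {lam μ : Fin n → ℤ} (hS : μ - lam ∈ exponentCone lam) (k : ℕ) :
    partialSum lam k ≤ partialSum (fun i => |μ i|) k := by
  induction k with
  | zero => simp [partialSum]
  | succ k ih =>
    by_cases hk : ∃ h : k < n, 0 < lam ⟨k, h⟩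
    · obtain ⟨h, hpos⟩ := hk
      have hμ : 0 ≤ partialSum (μ - lam) (k + 1) := hS ⟨k, h⟩ hpos
      rw [partialSum_sub] at hμ
      have : partialSum μ (k + 1) ≤ partialSum (fun i => |μ i|) (k + 1) :=
        sum_le_sum fun i _ => le_abs_self (μ i)
      omega
    · rw [partialSum_succ, partialSum_succ]
      simp only [not_exists, not_lt] at hk
      split_ifs with h
      · linarith [hk h, abs_nonneg (μ ⟨k, h⟩)]
      · simpa using ih

theorem sub_notMem_exponentCone {lam μ : Fin n → ℤ} (hlam : isPartition lam)
    (hprec : precOrd μ lam) : μ - lam ∉ exponentCone lam := by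
  intro hS
  have hdom : ∀ k, partialSum (dplus μ) k ≤ partialSum lam k := by
    rw [← dplus_of_isPartition hlam]
    rcases hprec.2 with ⟨h, -⟩ | ⟨h, -⟩
    · exact h
    · exact fun k => h ▸ le_rfl
  have habs : (fun i => |μ i|) = lam := eq_of_forall_partialSum_eq fun k =>
    ((partialSum_abs_le_partialSum_dplus μ k).trans (hdom k)).antisymm
      (partialSum_le_partialSum_abs hS k)
  refine hprec.1 (funext fun i => ?_)
  have hi : |μ i| = lam i := congrFun habs i
  by_cases hpos : 0 < lam i
  · -- if `μ i < |μ i|`, the partial sum of `μ` through `i` would fall below that of `lam`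
    by_contra hne
    have hlt : partialSum μ (i + 1) < partialSum (fun i => |μ i|) (i + 1) :=
      sum_lt_sum (fun j _ => le_abs_self (μ j))
        ⟨i, by simp, lt_of_le_of_ne (le_abs_self _) (by omega)⟩
    have := hS i hpos
    rw [partialSum_sub, ← habs] at this
    omega
  · rw [← hi, abs_pos, not_not] at hpos
    rw [← hi, hpos, abs_zero]

noncomputable def toTorus (θ : Fin n → ℝ) : Fin n → ℂ := fun i => Complex.exp (Complex.I * θ i)

lemma toTorus_ne_zero (θ : Fin n → ℝ) (i : Fin n) : toTorus θ i ≠ 0 := Complex.exp_ne_zero _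

lemma continuous_toTorus (i : Fin n) : Continuous fun θ : Fin n → ℝ => toTorus θ i := by
  unfold toTorus; fun_prop

lemma norm_toTorus (θ : Fin n → ℝ) (i : Fin n) : ‖toTorus θ i‖ = 1 := by
  simp [toTorus, Complex.norm_exp]

lemma one_sub_mul_inv_toTorus_ne_zero (θ : Fin n → ℝ) (i : Fin n) {α : ℂ} (hα : ‖α‖ < 1) :
    1 - α * (toTorus θ i)⁻¹ ≠ 0 := fun h =>
  (by simpa [norm_toTorus] using hα : ‖α * (toTorus θ i)⁻¹‖ < 1).ne
    (by rw [← sub_eq_zero.mp h, norm_one])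

noncomputable def monomial (ν : Fin n → ℤ) : (Fin n → ℝ) →ᵇ ℂ :=
  .ofNormedAddCommGroup (fun θ => ∏ i, toTorus θ i ^ ν i)
    (continuous_finsetProd _ fun i _ =>
      (continuous_toTorus i).zpow₀ _ fun θ => .inl (toTorus_ne_zero θ i))
    1 (fun θ => by simp [norm_toTorus])

lemma monomial_apply (ν : Fin n → ℤ) (θ : Fin n → ℝ) :
    monomial ν θ = ∏ i, toTorus θ i ^ ν i :=
  rfl

lemma norm_monomial_le (ν : Fin n → ℤ) : ‖monomial ν‖ ≤ 1 :=
  (BoundedContinuousFunction.norm_le zero_le_one).mpr fun θ => by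
    simp [monomial_apply, norm_toTorus]

lemma monomial_zero : monomial (0 : Fin n → ℤ) = 1 := by
  ext θ
  simp [monomial_apply]

lemma monomial_add (ν κ : Fin n → ℤ) : monomial (ν + κ) = monomial ν * monomial κ := by
  ext θ
  simp only [BoundedContinuousFunction.coe_mul, Pi.mul_apply, monomial_apply, Pi.add_apply,
    zpow_add₀ (toTorus_ne_zero θ _), prod_mul_distrib]

lemma monomial_neg_apply (ν : Fin n → ℤ) (θ : Fin n → ℝ) :
    monomial (-ν) θ = (monomial ν θ)⁻¹ := by
  simp [monomial_apply, prod_inv_distrib]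

@[simp]
lemma monomial_single_apply (i : Fin n) (m : ℤ) (θ : Fin n → ℝ) :
    monomial (Pi.single i m) θ = toTorus θ i ^ m := by
  rw [monomial_apply, Fintype.prod_eq_single i fun j hj => by simp [hj]]
  simp

noncomputable def torusMeasure (n : ℕ) : Measure (Fin n → ℝ) :=
  Measure.pi fun _ => volume.restrict (Set.Ioc 0 (2 * Real.pi))

instance : IsFiniteMeasure (torusMeasure n) := by
  unfold torusMeasure; infer_instance

lemma setIntegral_eq_integral_torusMeasure (f : (Fin n → ℝ) → ℂ) :
    ∫ θ in Set.univ.pi fun _ : Fin n => Set.Ioc (0 : ℝ) (2 * Real.pi), f θ =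
      ∫ θ, f θ ∂torusMeasure n := by
  rw [torusMeasure, ← Measure.restrict_pi_pi]
  rfl

lemma integral_exp_I_mul_zpow {k : ℤ} (hk : k ≠ 0) :
    ∫ x in Set.Ioc 0 (2 * Real.pi), Complex.exp (Complex.I * x) ^ k = 0 := by
  have hexp : ∀ x : ℝ, Complex.exp (Complex.I * x) ^ k = Complex.exp (k * Complex.I * x) :=
    fun x => by rw [← Complex.exp_int_mul]; ring_nf
  simp_rw [← intervalIntegral.integral_of_le Real.two_pi_pos.le, hexp]
  rw [integral_exp_mul_complex (by simp [hk, Complex.I_ne_zero])]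
  have : Complex.exp (k * Complex.I * (2 * Real.pi : ℝ)) = 1 := by
    rw [← Complex.exp_int_mul_two_pi_mul_I k]
    push_cast
    ring_nf
  rw [this]
  simp

lemma integral_monomial {ν : Fin n → ℤ} (hν : ν ≠ 0) : ∫ θ, monomial ν θ ∂torusMeasure n = 0 := by
  obtain ⟨i, hi⟩ := Function.ne_iff.mp hν
  simp only [monomial_apply, toTorus, torusMeasure]
  rw [integral_fintype_prod_eq_prod (f := fun i (x : ℝ) => Complex.exp (Complex.I * x) ^ ν i)]
  exact prod_eq_zero (mem_univ i) (integral_exp_I_mul_zpow hi)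

noncomputable def trigPoly (S : AddSubmonoid (Fin n → ℤ)) :
    Subalgebra ℂ ((Fin n → ℝ) →ᵇ ℂ) :=
  Algebra.adjoin ℂ (monomial '' (S : Set (Fin n → ℤ)))

lemma monomial_mem_trigPoly {S : AddSubmonoid (Fin n → ℤ)} {ν : Fin n → ℤ} (hν : ν ∈ S) :
    monomial ν ∈ trigPoly S :=
  Algebra.subset_adjoin ⟨ν, hν, rfl⟩

lemma mem_trigPoly_iff_mem_span {S : AddSubmonoid (Fin n → ℤ)} {g : (Fin n → ℝ) →ᵇ ℂ} :
    g ∈ trigPoly S ↔ g ∈ Submodule.span ℂ (monomial '' (S : Set (Fin n → ℤ))) := by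
  have hclosure : (Submonoid.closure (monomial '' (S : Set (Fin n → ℤ))) : Set _) =
      monomial '' (S : Set (Fin n → ℤ)) := by
    let M : Submonoid ((Fin n → ℝ) →ᵇ ℂ) :=
      { carrier := monomial '' (S : Set (Fin n → ℤ))
        mul_mem' := by
          rintro _ _ ⟨ν, hν, rfl⟩ ⟨ν', hν', rfl⟩
          exact ⟨ν + ν', S.add_mem hν hν', monomial_add ν ν'⟩
        one_mem' := ⟨0, S.zero_mem, monomial_zero⟩ }
    exact congrArg SetLike.coe (Submonoid.closure_eq M)
  rw [← Subalgebra.mem_toSubmodule, trigPoly, Algebra.adjoin_eq_span, hclosure]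

noncomputable def trigClosure (S : AddSubmonoid (Fin n → ℤ)) :
    Subalgebra ℂ ((Fin n → ℝ) → ℂ) :=
  (trigPoly S).topologicalClosure.map
    ((ContinuousMap.coeFnAlgHom ℂ).comp (BoundedContinuousFunction.toContinuousMapₐ ℂ))

lemma mem_trigClosure {S : AddSubmonoid (Fin n → ℤ)} {f : (Fin n → ℝ) → ℂ} :
    f ∈ trigClosure S ↔ ∃ g ∈ (trigPoly S).topologicalClosure, ⇑g = f :=
  Iff.rfl

lemma monomial_mem_trigClosure {S : AddSubmonoid (Fin n → ℤ)} {ν : Fin n → ℤ} (hν : ν ∈ S) :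
    ⇑(monomial ν) ∈ trigClosure S :=
  mem_trigClosure.mpr ⟨_, Subalgebra.le_topologicalClosure _ (monomial_mem_trigPoly hν), rfl⟩

lemma one_sub_mul_monomial_mem_trigClosure {S : AddSubmonoid (Fin n → ℤ)} {ν : Fin n → ℤ}
    (hν : ν ∈ S) (α : ℂ) : (fun θ => 1 - α * monomial ν θ) ∈ trigClosure S :=
  sub_mem (one_mem _) (Subalgebra.smul_mem _ (monomial_mem_trigClosure hν) α)

/-- The geometric series `∑ αᵏ z^{kν}` converges uniformly, since `|α| < 1`. -/
lemma inv_one_sub_mul_monomial_mem_trigClosure {S : AddSubmonoid (Fin n → ℤ)} {ν : Fin n → ℤ}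
    (hν : ν ∈ S) {α : ℂ} (hα : ‖α‖ < 1) :
    (fun θ => (1 - α * monomial ν θ)⁻¹) ∈ trigClosure S := by
  set x := α • monomial ν
  have hx : ‖x‖ < 1 := (norm_smul_le α _).trans_lt <| by
    simpa using mul_le_of_le_one_right (norm_nonneg α) (norm_monomial_le ν) |>.trans_lt hα
  have hxA : x ∈ (trigPoly S).topologicalClosure :=
    Subalgebra.le_topologicalClosure _ ((trigPoly S).smul_mem (monomial_mem_trigPoly hν) α)
  refine mem_trigClosure.mpr ⟨∑' i, x ^ i, tsum_mem (Subalgebra.isClosed_topologicalClosure _)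
    fun i => pow_mem hxA i, funext fun θ => ?_⟩
  refine eq_inv_of_mul_eq_one_left ?_
  simpa [x] using congrArg (· θ) (geom_series_mul_neg x hx)

theorem integral_mul_monomial_eq_zero {S : AddSubmonoid (Fin n → ℤ)} {f : (Fin n → ℝ) → ℂ}
    (hf : f ∈ trigClosure S) {κ : Fin n → ℤ} (hκ : κ ∉ S) :
    ∫ θ, f θ * monomial (-κ) θ ∂torusMeasure n = 0 := by
  obtain ⟨g, hg, rfl⟩ := mem_trigClosure.mp hf
  let Φ : ((Fin n → ℝ) →ᵇ ℂ) →L[ℂ] ℂ :=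
    (BoundedContinuousFunction.integralCLM (torusMeasure n)).comp
      ((ContinuousLinearMap.mul ℂ _).flip (monomial (-κ)))
  have hpoly : (trigPoly S : Set ((Fin n → ℝ) →ᵇ ℂ)) ⊆ (Φ.ker : Set _) := fun x hx => by
    rw [SetLike.mem_coe, mem_trigPoly_iff_mem_span] at hx
    refine (Submodule.span_le (p := Φ.ker).mpr ?_) hx
    rintro _ ⟨ν, hν, rfl⟩
    have hne : -κ + ν ≠ 0 := by
      rw [neg_add_eq_sub, sub_ne_zero]
      rintro rfl
      exact hκ hν
    simpa [Φ, BoundedContinuousFunction.integralCLM_apply, ← monomial_add] using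
      integral_monomial hne
  have hclosure : ((trigPoly S).topologicalClosure : Set ((Fin n → ℝ) →ᵇ ℂ)) ⊆ Φ.ker := by
    rw [Subalgebra.topologicalClosure_coe]
    exact closure_minimal hpoly Φ.isClosed_ker
  simpa [Φ, BoundedContinuousFunction.integralCLM_apply, mul_comm] using hclosure hg

noncomputable def crossDensity (t : ℂ) (z : Fin n → ℂ) : ℂ :=
  ∏ i : Fin n, ∏ j : Fin n,
    if i < j then
      ((1 - z i * z j) * (1 - z i * (z j)⁻¹)) /
        ((1 - t * z i * z j) * (1 - t * z i * (z j)⁻¹))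
    else 1

/-- `E_λ · Δ_K / z^λ`: the factors `(1 - c/z_i)(1 - d/z_i)` of `E_λ` cancel those of the
density exactly where `λ_i > 0`. -/
noncomputable def reducedDensity (lam : Fin n → ℤ) (t a b c d : ℂ) (z : Fin n → ℂ) : ℂ :=
  (∏ i, (1 - z i ^ 2) / ((1 - a * z i) * (1 - b * z i) * (1 - c * z i) * (1 - d * z i)) *
      if 0 < lam i then 1 else ((1 - c * (z i)⁻¹) * (1 - d * (z i)⁻¹))⁻¹) *
    crossDensity t z

lemma Epoly_mul_nsDensity {lam : Fin n → ℤ} (hlam : ∀ i, 0 ≤ lam i) (t a b c d : ℂ)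
    {z : Fin n → ℂ} (hc : ∀ i, 1 - c * (z i)⁻¹ ≠ 0) (hd : ∀ i, 1 - d * (z i)⁻¹ ≠ 0) :
    Epoly n lam c d z * nsDensity n t a b c d z =
      (∏ i, z i ^ lam i) * reducedDensity lam t a b c d z := by
  rw [Epoly, prod_filter, nsDensity, reducedDensity, crossDensity, ← mul_assoc, ← mul_assoc]
  congr 1
  rw [← prod_mul_distrib, ← prod_mul_distrib]
  refine prod_congr rfl fun i _ => ?_
  have hci := hc i
  have hdi := hd i
  generalize 1 - c * (z i)⁻¹ = C at *
  generalize 1 - d * (z i)⁻¹ = D at *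
  split_ifs with h
  · field_simp
  · rw [le_antisymm (not_lt.mp h) (hlam i)]
    field_simp

theorem reducedDensity_mem_trigClosure {lam : Fin n → ℤ} (hlam : Antitone lam) {t a b c d : ℂ}
    (ha : ‖a‖ < 1) (hb : ‖b‖ < 1) (hc : ‖c‖ < 1) (hd : ‖d‖ < 1) (ht : ‖t‖ < 1) :
    (fun θ => reducedDensity lam t a b c d (toTorus θ)) ∈ trigClosure (exponentCone lam) := by
  set S := exponentCone lam
  have h_single := fun i => single_mem_exponentCone lam i zero_le_one
  have h_pair := fun i j => S.add_mem (h_single i) (h_single j)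
  have hdiag : ∀ i, (fun θ => (1 - toTorus θ i ^ 2) / ((1 - a * toTorus θ i) *
      (1 - b * toTorus θ i) * (1 - c * toTorus θ i) * (1 - d * toTorus θ i)) *
      if 0 < lam i then 1 else
        ((1 - c * (toTorus θ i)⁻¹) * (1 - d * (toTorus θ i)⁻¹))⁻¹) ∈ trigClosure S := fun i => by
    simp only [div_eq_mul_inv, mul_inv]
    refine mul_mem (mul_mem ?_ (mul_mem (mul_mem (mul_mem ?_ ?_) ?_) ?_)) ?_
    · simpa using one_sub_mul_monomial_mem_trigClosure
        (single_mem_exponentCone lam i zero_le_two) 1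
    · simpa using inv_one_sub_mul_monomial_mem_trigClosure (h_single i) ha
    · simpa using inv_one_sub_mul_monomial_mem_trigClosure (h_single i) hb
    · simpa using inv_one_sub_mul_monomial_mem_trigClosure (h_single i) hc
    · simpa using inv_one_sub_mul_monomial_mem_trigClosure (h_single i) hd
    · by_cases hi : 0 < lam i
      · simp only [hi, if_true]
        exact one_mem _
      · have h_inv := single_mem_exponentCone_of_not_pos hlam hi (-1)
        simp only [hi, if_false]
        exact mul_mem (by simpa using inv_one_sub_mul_monomial_mem_trigClosure h_inv hc)
          (by simpa using inv_one_sub_mul_monomial_mem_trigClosure h_inv hd)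
  have hcross : ∀ i j, (fun θ => if i < j then
      ((1 - toTorus θ i * toTorus θ j) * (1 - toTorus θ i * (toTorus θ j)⁻¹)) /
        ((1 - t * toTorus θ i * toTorus θ j) * (1 - t * toTorus θ i * (toTorus θ j)⁻¹))
      else 1) ∈ trigClosure S := fun i j => by
    by_cases hij : i < j
    · have h_diff := single_sub_single_mem_exponentCone lam hij zero_le_one
      simp only [hij, if_true, div_eq_mul_inv, mul_inv]
      refine mul_mem (mul_mem ?_ ?_) (mul_mem ?_ ?_)
      · simpa [monomial_add] using one_sub_mul_monomial_mem_trigClosure (h_pair i j) 1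
      · simpa [sub_eq_add_neg, monomial_add, monomial_neg_apply] using
          one_sub_mul_monomial_mem_trigClosure h_diff 1
      · simpa [monomial_add, mul_assoc] using
          inv_one_sub_mul_monomial_mem_trigClosure (h_pair i j) ht
      · simpa [sub_eq_add_neg, monomial_add, monomial_neg_apply, mul_assoc] using
          inv_one_sub_mul_monomial_mem_trigClosure h_diff ht
    · simp only [hij, if_false]
      exact one_mem _
  exact mul_mem (Subalgebra.fun_prod_mem _ fun i _ => hdiag i)
    (Subalgebra.fun_prod_mem _ fun i _ => Subalgebra.fun_prod_mem _ fun j _ => hcross i j)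

end Koornwinder

open Koornwinder

/-- Orthogonality: for a partition `λ` and a composition `μ ≺ λ`,
`⟨E_λ^{(n)}(z;c,d), z^μ⟩₀ = ∫_T E_λ^{(n)} z^{−μ} Δ_K^{(n)} dT = 0`. -/
theorem E_orthogonality (n : ℕ) (lam μ : Fin n → ℤ)
    (hlam : isPartition lam) (hprec : precOrd μ lam) (a b c d t : ℂ)
    (ha : ‖a‖ < 1) (hb : ‖b‖ < 1) (hc : ‖c‖ < 1) (hd : ‖d‖ < 1) (ht : ‖t‖ < 1) :
    torusInt n (fun z =>
      Epoly n lam c d z * (∏ i : Fin n, z i ^ (-μ i)) * nsDensity n t a b c d z) = 0 := by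
  have hintegrand : ∀ θ, Epoly n lam c d (toTorus θ) * (∏ i, toTorus θ i ^ (-μ i)) *
      nsDensity n t a b c d (toTorus θ) =
        reducedDensity lam t a b c d (toTorus θ) * monomial (-(μ - lam)) θ := fun θ => by
    rw [mul_right_comm, Epoly_mul_nsDensity hlam.1 t a b c d
      (fun i => one_sub_mul_inv_toTorus_ne_zero θ i hc)
      (fun i => one_sub_mul_inv_toTorus_ne_zero θ i hd),
      show -(μ - lam) = lam + -μ by abel, monomial_add, BoundedContinuousFunction.coe_mul,
      Pi.mul_apply, monomial_apply, monomial_apply]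
    simp only [Pi.neg_apply]
    ring
  rw [torusInt, setIntegral_eq_integral_torusMeasure]
  refine mul_eq_zero_of_right _ ((integral_congr_ae (.of_forall hintegrand)).trans ?_)
  exact integral_mul_monomial_eq_zero (reducedDensity_mem_trigClosure hlam.2 ha hb hc hd ht)
    (sub_notMem_exponentCone hlam hprec)
end

section
/- With Δ_BC = ∏_i (z_i − z_i^{−1}) ∏_{i<j} (z_i^{−1} − z_j − z_j^{−1} + z_i), the product K_λ^{(n)}·Δ_BC equals (1/v_λ) ∑_{w∈B_n} ε(w) w(∏_i u'_λ(z_i) ∏_{i<j} (1−t z_i^{−1}z_j^{−1})(z_i − t z_j)), where u'_λ(z_i) = z_i(1−az_i^{−1})(1−bz_i^{−1}) if λ_i = 0 and u'_λ(z_i) = z_i^{λ_i+1}(1−t₀z_i^{−1})⋯(1−t₃z_i^{−1}) if λ_i > 0. -/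
open Finset

/-- Action of an element `(σ, ε)` of the hyperoctahedral group `B_n` on a point
`z ∈ (ℂ*)ⁿ`: permute the variables by `σ` and invert those with `ε i = true`. -/
noncomputable def bnAct {n : ℕ} (σ : Equiv.Perm (Fin n)) (ε : Fin n → Bool)
    (z : Fin n → ℂ) : Fin n → ℂ :=
  fun i => if ε i then (z (σ i))⁻¹ else z (σ i)

/-- The univariate factor `u_λ(z_i)` of the `q = 0` Koornwinder kernel. -/
noncomputable def uLam (l : ℤ) (a b t0 t1 t2 t3 : ℂ) (x : ℂ) : ℂ :=
  if l = 0 then (1 - a * x⁻¹) * (1 - b * x⁻¹) / (1 - x⁻¹ ^ 2)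
  else x ^ l * ((1 - t0 * x⁻¹) * (1 - t1 * x⁻¹) * (1 - t2 * x⁻¹) * (1 - t3 * x⁻¹)) /
    (1 - x⁻¹ ^ 2)

/-- The base term `∏_i u_λ(z_i) ∏_{i<j} (1−tz_i⁻¹z_j)(1−tz_i⁻¹z_j⁻¹)/[(1−z_i⁻¹z_j)(1−z_i⁻¹z_j⁻¹)]`. -/
noncomputable def Rbase {n : ℕ} (lam : Fin n → ℤ) (t a b t0 t1 t2 t3 : ℂ)
    (y : Fin n → ℂ) : ℂ :=
  (∏ i : Fin n, uLam (lam i) a b t0 t1 t2 t3 (y i)) *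
  ∏ i : Fin n, ∏ j : Fin n,
    if i < j then
      ((1 - t * (y i)⁻¹ * y j) * (1 - t * (y i)⁻¹ * (y j)⁻¹)) /
        ((1 - (y i)⁻¹ * y j) * (1 - (y i)⁻¹ * (y j)⁻¹))
    else 1

/-- The normalization constant `v_λ(t;a,b;t₀,…,t₃)`. -/
noncomputable def vlam {n : ℕ} (lam : Fin n → ℤ) (t a b t0 t1 t2 t3 : ℂ) : ℂ :=
  (∏ p : Fin n,
      (1 - t ^ (Finset.univ.filter fun q : Fin n => lam q = lam p ∧ q ≤ p).card) / (1 - t)) *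
  (∏ i ∈ Finset.range ((Finset.univ.filter fun q : Fin n => lam q = 1).card),
      (1 - t0 * t1 * t2 * t3 *
        t ^ (i + 2 * (Finset.univ.filter fun q : Fin n => lam q = 0).card))) *
  ∏ i ∈ Finset.range ((Finset.univ.filter fun q : Fin n => lam q = 0).card),
      (1 - a * b * t ^ i)

/-- The `q = 0` symmetric Koornwinder polynomial `K_λ^{(n)}(z;t;a,b;t₀,…,t₃)`,
defined as `v_λ⁻¹` times the sum over the hyperoctahedral group `B_n`. -/
noncomputable def Kpoly {n : ℕ} (lam : Fin n → ℤ) (t a b t0 t1 t2 t3 : ℂ)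
    (z : Fin n → ℂ) : ℂ :=
  (vlam lam t a b t0 t1 t2 t3)⁻¹ *
    ∑ σ : Equiv.Perm (Fin n), ∑ ε : Fin n → Bool,
      Rbase lam t a b t0 t1 t2 t3 (bnAct σ ε z)

/-- Genericity condition on `z`: all the denominators appearing in the terms of
`K_λ^{(n)}` are nonzero (for every element of `B_n`). -/
def genericZ {n : ℕ} (z : Fin n → ℂ) : Prop :=
  (∀ i, z i ≠ 0 ∧ z i ^ 2 ≠ 1) ∧
    ∀ i j : Fin n, i ≠ j → z i * z j ≠ 1 ∧ z i ≠ z j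

/-- The fully `BC_n`-antisymmetric Laurent polynomial
`Δ_BC = ∏_i (z_i − z_i⁻¹) ∏_{i<j} (z_i⁻¹ − z_j − z_j⁻¹ + z_i)`. -/
noncomputable def deltaBC {n : ℕ} (z : Fin n → ℂ) : ℂ :=
  (∏ i : Fin n, (z i - (z i)⁻¹)) *
  ∏ i : Fin n, ∏ j : Fin n,
    if i < j then (z i)⁻¹ - z j - (z j)⁻¹ + z i else 1

/-- The modified univariate factor `u'_λ(z_i)`. -/
noncomputable def uLam' (l : ℤ) (a b t0 t1 t2 t3 : ℂ) (x : ℂ) : ℂ :=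
  if l = 0 then x * (1 - a * x⁻¹) * (1 - b * x⁻¹)
  else x ^ (l + 1) * ((1 - t0 * x⁻¹) * (1 - t1 * x⁻¹) * (1 - t2 * x⁻¹) * (1 - t3 * x⁻¹))

/-- The modified base term `∏_i u'_λ(z_i) ∏_{i<j} (1−tz_i⁻¹z_j⁻¹)(z_i−tz_j)`. -/
noncomputable def Rbase' {n : ℕ} (lam : Fin n → ℤ) (t a b t0 t1 t2 t3 : ℂ)
    (y : Fin n → ℂ) : ℂ :=
  (∏ i : Fin n, uLam' (lam i) a b t0 t1 t2 t3 (y i)) *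
  ∏ i : Fin n, ∏ j : Fin n,
    if i < j then (1 - t * (y i)⁻¹ * (y j)⁻¹) * (y i - t * y j) else 1

/-!
The `B_n` action fixes each `z_i + z_i⁻¹` up to permutation and flips the sign of
`z_i - z_i⁻¹` under inversion. Since `Δ_BC` is `∏ (z_i - z_i⁻¹)` times the Vandermonde product
of the `z_i + z_i⁻¹`, it transforms by the sign character: `Δ_BC(w z) = ε(w) Δ_BC(z)`.
So each term `w(base) · Δ_BC(z)` of `K_λ · Δ_BC` equals `ε(w) · w(base · Δ_BC)`, and `Δ_BC` clears
every denominator of the base term: `x - x⁻¹ = x (1 - x⁻²)` and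
`u⁻¹ - v - v⁻¹ + u = u (1 - u⁻¹v)(1 - u⁻¹v⁻¹)`.
-/

open Equiv

section

variable {n : ℕ}

lemma prod_ite_lt_eq_prod_Ioi {M : Type*} [CommMonoid M] (f : Fin n → Fin n → M) :
    (∏ i, ∏ j, if i < j then f i j else 1) = ∏ i, ∏ j ∈ Ioi i, f i j := by
  simp only [← prod_filter, filter_lt_eq_Ioi]

lemma prod_Ioi_sub_comp_perm {R : Type*} [CommRing R] (σ : Perm (Fin n)) (f : Fin n → R) :
    ∏ i, ∏ j ∈ Ioi i, (f (σ i) - f (σ j)) = Perm.sign σ * ∏ i, ∏ j ∈ Ioi i, (f i - f j) := by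
  -- the Vandermonde determinant of `-g` has the factors `g i - g j` in the order used here
  have hdet (g : Fin n → R) :
      ∏ i, ∏ j ∈ Ioi i, (g i - g j) = (Matrix.vandermonde (-g)).det := by
    simp only [Matrix.det_vandermonde, Pi.neg_apply, neg_sub_neg]
  rw [hdet, hdet, ← Matrix.det_permute]
  rfl

/-- The sign character `ε(w)` of `w = (σ, ε) ∈ B_n`. -/
noncomputable def bnSign (σ : Perm (Fin n)) (ε : Fin n → Bool) : ℂ :=
  ((Perm.sign σ : ℤ) : ℂ) * ∏ i, if ε i then (-1 : ℂ) else 1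

lemma bnSign_mul_self (σ : Perm (Fin n)) (ε : Fin n → Bool) : bnSign σ ε * bnSign σ ε = 1 := by
  have hσ : ((Perm.sign σ : ℤ) : ℂ) * (Perm.sign σ : ℤ) = 1 := by
    rw [← Int.cast_mul, ← Units.val_mul, Int.units_mul_self, Units.val_one, Int.cast_one]
  have hε : (∏ i, if ε i then (-1 : ℂ) else 1) * ∏ i, (if ε i then (-1 : ℂ) else 1) = 1 := by
    rw [← prod_mul_distrib]
    exact prod_eq_one fun i _ => by cases ε i <;> norm_num
  rw [bnSign, mul_mul_mul_comm, hσ, hε, one_mul]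

lemma bnAct_ne_zero (σ : Perm (Fin n)) (ε : Fin n → Bool) {z : Fin n → ℂ}
    (hz : ∀ i, z i ≠ 0) (i : Fin n) : bnAct σ ε z i ≠ 0 := by
  unfold bnAct
  split <;> simp [hz]

lemma bnAct_add_inv (σ : Perm (Fin n)) (ε : Fin n → Bool) (z : Fin n → ℂ) (i : Fin n) :
    bnAct σ ε z i + (bnAct σ ε z i)⁻¹ = z (σ i) + (z (σ i))⁻¹ := by
  unfold bnAct
  split
  · rw [inv_inv, add_comm]
  · rfl

lemma bnAct_sub_inv (σ : Perm (Fin n)) (ε : Fin n → Bool) (z : Fin n → ℂ) (i : Fin n) :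
    bnAct σ ε z i - (bnAct σ ε z i)⁻¹
      = (if ε i then (-1 : ℂ) else 1) * (z (σ i) - (z (σ i))⁻¹) := by
  unfold bnAct
  split
  · rw [inv_inv, neg_one_mul, neg_sub]
  · rw [one_mul]

lemma deltaBC_eq (z : Fin n → ℂ) :
    deltaBC z = (∏ i, (z i - (z i)⁻¹)) *
      ∏ i, ∏ j ∈ Ioi i, ((z i + (z i)⁻¹) - (z j + (z j)⁻¹)) := by
  rw [deltaBC, prod_ite_lt_eq_prod_Ioi]
  congr 1
  exact prod_congr rfl fun i _ => prod_congr rfl fun j _ => by ring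

lemma deltaBC_bnAct (σ : Perm (Fin n)) (ε : Fin n → Bool) (z : Fin n → ℂ) :
    deltaBC (bnAct σ ε z) = bnSign σ ε * deltaBC z := by
  simp only [deltaBC_eq, bnAct_add_inv, bnAct_sub_inv, prod_mul_distrib,
    Perm.prod_comp σ univ (fun k => z k - (z k)⁻¹) (by simp),
    prod_Ioi_sub_comp_perm σ (fun k => z k + (z k)⁻¹), bnSign]
  ring

lemma genericZ.deltaBC_ne_zero {z : Fin n → ℂ} (hz : genericZ z) : deltaBC z ≠ 0 := by
  obtain ⟨hpt, hpair⟩ := hz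
  rw [deltaBC, prod_ite_lt_eq_prod_Ioi]
  refine mul_ne_zero (prod_ne_zero_iff.2 fun i _ => ?_)
    (prod_ne_zero_iff.2 fun i _ => prod_ne_zero_iff.2 fun j hj => ?_)
  · obtain ⟨hz0, hsq⟩ := hpt i
    have hfactor : z i - (z i)⁻¹ = (z i ^ 2 - 1) / z i := by field_simp
    rw [hfactor]
    exact div_ne_zero (sub_ne_zero.2 hsq) hz0
  · obtain ⟨hprod, hne⟩ := hpair i j (mem_Ioi.1 hj).ne
    have hfactor : (z i)⁻¹ - z j - (z j)⁻¹ + z i = (z i - z j) * (1 - (z i * z j)⁻¹) := by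
      field_simp [(hpt i).1, (hpt j).1]
      ring
    rw [hfactor]
    exact mul_ne_zero (sub_ne_zero.2 hne) (sub_ne_zero.2 (inv_ne_one.2 hprod).symm)

lemma uLam_mul_sub_inv (l : ℤ) (a b t0 t1 t2 t3 : ℂ) {x : ℂ} (hx : x ≠ 0)
    (hx' : x - x⁻¹ ≠ 0) : uLam l a b t0 t1 t2 t3 x * (x - x⁻¹) = uLam' l a b t0 t1 t2 t3 x := by
  have hfactor : x - x⁻¹ = x * (1 - x⁻¹ ^ 2) := by field_simp
  have hden : 1 - x⁻¹ ^ 2 ≠ 0 := right_ne_zero_of_mul (hfactor ▸ hx')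
  unfold uLam uLam'
  split_ifs
  · rw [hfactor, mul_left_comm, div_mul_cancel₀ _ hden]
    ring
  · rw [hfactor, mul_left_comm, div_mul_cancel₀ _ hden, zpow_add_one₀ hx]
    ring

lemma pair_mul_inv_sub_sub_inv_add (t : ℂ) {u v : ℂ} (hu : u ≠ 0) (hv : v ≠ 0)
    (huv : u⁻¹ - v - v⁻¹ + u ≠ 0) :
    (1 - t * u⁻¹ * v) * (1 - t * u⁻¹ * v⁻¹) / ((1 - u⁻¹ * v) * (1 - u⁻¹ * v⁻¹)) *
      (u⁻¹ - v - v⁻¹ + u) = (1 - t * u⁻¹ * v⁻¹) * (u - t * v) := by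
  have hfactor : u⁻¹ - v - v⁻¹ + u = u * ((1 - u⁻¹ * v) * (1 - u⁻¹ * v⁻¹)) := by
    field_simp
    ring
  have hden := right_ne_zero_of_mul (hfactor ▸ huv)
  rw [hfactor, mul_left_comm, div_mul_cancel₀ _ hden]
  field_simp

lemma Rbase_mul_deltaBC (lam : Fin n → ℤ) (t a b t0 t1 t2 t3 : ℂ) {y : Fin n → ℂ}
    (hy : ∀ i, y i ≠ 0) (hΔ : deltaBC y ≠ 0) :
    Rbase lam t a b t0 t1 t2 t3 y * deltaBC y = Rbase' lam t a b t0 t1 t2 t3 y := by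
  unfold deltaBC at hΔ ⊢
  obtain ⟨hpt, hpair⟩ := mul_ne_zero_iff.1 hΔ
  unfold Rbase Rbase'
  rw [mul_mul_mul_comm, ← prod_mul_distrib, ← prod_mul_distrib]
  congr 1
  · exact prod_congr rfl fun i _ =>
      uLam_mul_sub_inv (lam i) a b t0 t1 t2 t3 (hy i) (prod_ne_zero_iff.1 hpt i (mem_univ i))
  · refine prod_congr rfl fun i _ => ?_
    rw [← prod_mul_distrib]
    refine prod_congr rfl fun j _ => ?_
    split_ifs with hij
    · refine pair_mul_inv_sub_sub_inv_add t (hy i) (hy j) ?_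
      have := prod_ne_zero_iff.1 (prod_ne_zero_iff.1 hpair i (mem_univ i)) j (mem_univ j)
      rwa [if_pos hij] at this
    · rw [mul_one]

end

theorem K_mul_deltaBC_general (n : ℕ) (lam : Fin n → ℤ)
    (t a b t0 t1 t2 t3 : ℂ) :
    ∀ z : Fin n → ℂ, genericZ z →
      Kpoly lam t a b t0 t1 t2 t3 z * deltaBC z
      = (vlam lam t a b t0 t1 t2 t3)⁻¹ *
          ∑ σ : Equiv.Perm (Fin n), ∑ ε : Fin n → Bool,
            ((Equiv.Perm.sign σ : ℤ) : ℂ) * (∏ i : Fin n, if ε i then (-1 : ℂ) else 1) *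
              Rbase' lam t a b t0 t1 t2 t3 (bnAct σ ε z) := by
  intro z hz
  have hterm (σ : Perm (Fin n)) (ε : Fin n → Bool) :
      Rbase lam t a b t0 t1 t2 t3 (bnAct σ ε z) * deltaBC z
        = bnSign σ ε * Rbase' lam t a b t0 t1 t2 t3 (bnAct σ ε z) := by
    have hsign := bnSign_mul_self σ ε
    have hΔ : deltaBC (bnAct σ ε z) ≠ 0 := by
      rw [deltaBC_bnAct]
      exact mul_ne_zero (left_ne_zero_of_mul_eq_one hsign) hz.deltaBC_ne_zero
    rw [← Rbase_mul_deltaBC lam t a b t0 t1 t2 t3 (bnAct_ne_zero σ ε (fun i => (hz.1 i).1)) hΔ,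
      deltaBC_bnAct]
    linear_combination (-(Rbase lam t a b t0 t1 t2 t3 (bnAct σ ε z) * deltaBC z)) * hsign
  simp only [Kpoly, mul_assoc, sum_mul, hterm, bnSign]

/-- The product `K_λ^{(n)}·Δ_BC` equals
`v_λ⁻¹ ∑_{w∈B_n} ε(w) w(∏_i u'_λ(z_i) ∏_{i<j} (1−tz_i⁻¹z_j⁻¹)(z_i−tz_j))`. -/
theorem K_mul_deltaBC (n : ℕ) (lam : Fin n → ℤ) (hlam : isPartition lam)
    (t a b t0 t1 t2 t3 : ℂ) (hv : vlam lam t a b t0 t1 t2 t3 ≠ 0) :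
    ∀ z : Fin n → ℂ, genericZ z →
      Kpoly lam t a b t0 t1 t2 t3 z * deltaBC z
      = (vlam lam t a b t0 t1 t2 t3)⁻¹ *
          ∑ σ : Equiv.Perm (Fin n), ∑ ε : Fin n → Bool,
            ((Equiv.Perm.sign σ : ℤ) : ℂ) * (∏ i : Fin n, if ε i then (-1 : ℂ) else 1) *
              Rbase' lam t a b t0 t1 t2 t3 (bnAct σ ε z) :=
  K_mul_deltaBC_general n lam t a b t0 t1 t2 t3
end
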